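/- arXiv:1508.06934 — 3 statements merged into one kernel-verified Lean document; each statement's English description precedes it below -/
import Mathlib

section
/- Let G1 and G2 be finite simple cubic graphs, let v1 be a vertex of G1 and v2 a vertex of G2, and let f be a bijection from the neighborhood of v1 to the neighborhood of v2. Suppose G1 has exactly a1 proper 3-edge colorings counted up to permutation of the colors, and G2 has exactly a2 proper 3-edge colorings counted up to permutation of the colors. Then the Y-join of G1 and G2 (formed using v1, v2, f) has exactly a1·a2 proper 3-edge colorings counted up to permutation of the colors. -/
/-!
In a proper 3-edge coloring of a cubic graph the three edges at a vertex receive all three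
colors. The same holds for the three cut edges of the Y-join, by parity: the side coming from
`G₁` has an odd number of vertices, so each color class, a perfect matching, must cross the cut.
Hence fixing the colors of three such "frame" edges selects exactly one coloring from each class
up to permutation. With the cut edges, the edges at `v₁` and the edges at `v₂` all framed by
the same colors (matched through `f`), colorings of the Y-join correspond to pairs of colorings
of `G₁` and `G₂`: restrict to each side, giving the edges at `vᵢ` the colors of the cut edges,
and conversely glue.
-/

/-- A cubic graph: every vertex has exactly 3 neighbors (3-regular). -/
def IsCubic {V : Type} (G : SimpleGraph V) : Prop := ∀ v : V, (G.neighborSet v).ncard = 3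

/-- A proper 3-edge coloring: a function from the edge set to 3 colors such that
distinct edges sharing a vertex receive different colors. -/
def IsProper3EdgeColoring {V : Type} (G : SimpleGraph V) (c : G.edgeSet → Fin 3) : Prop :=
  ∀ e₁ e₂ : G.edgeSet, e₁ ≠ e₂ →
    (∃ v : V, v ∈ (e₁ : Sym2 V) ∧ v ∈ (e₂ : Sym2 V)) → c e₁ ≠ c e₂

/-- Proper 3-edge colorings up to permutation of the colors. -/
def edgeColoringSetoid {V : Type} (G : SimpleGraph V) :
    Setoid {c : G.edgeSet → Fin 3 // IsProper3EdgeColoring G c} where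
  r c₁ c₂ := ∃ σ : Equiv.Perm (Fin 3), ∀ e, σ (c₁.1 e) = c₂.1 e
  iseqv := by
    constructor
    · exact fun c => ⟨Equiv.refl _, fun e => rfl⟩
    · rintro c₁ c₂ ⟨σ, h⟩
      exact ⟨σ.symm, fun e => by rw [← h e, Equiv.symm_apply_apply]⟩
    · rintro c₁ c₂ c₃ ⟨σ, h⟩ ⟨τ, h'⟩
      exact ⟨σ.trans τ, fun e => by rw [Equiv.trans_apply, h e, h' e]⟩

/-- The Y-join of two cubic graphs `G₁`, `G₂` with respect to vertices `v₁`, `v₂` and a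
bijection `f` between their neighborhoods: delete `v₁` and `v₂` and join each neighbor
`u` of `v₁` to `f u` by a matching edge. -/
def YJoin {V₁ V₂ : Type} (G₁ : SimpleGraph V₁) (G₂ : SimpleGraph V₂) (v₁ : V₁) (v₂ : V₂)
    (f : G₁.neighborSet v₁ ≃ G₂.neighborSet v₂) :
    SimpleGraph ({x : V₁ // x ≠ v₁} ⊕ {y : V₂ // y ≠ v₂}) where
  Adj p q :=
    match p, q with
    | Sum.inl a, Sum.inl b => G₁.Adj a.1 b.1
    | Sum.inr a, Sum.inr b => G₂.Adj a.1 b.1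
    | Sum.inl a, Sum.inr b => ∃ h : a.1 ∈ G₁.neighborSet v₁, (f ⟨a.1, h⟩ : V₂) = b.1
    | Sum.inr b, Sum.inl a => ∃ h : a.1 ∈ G₁.neighborSet v₁, (f ⟨a.1, h⟩ : V₂) = b.1
  symm := by
    constructor
    rintro (a | a) (b | b) h
    · exact G₁.adj_symm h
    · exact h
    · exact h
    · exact G₂.adj_symm h
  loopless := by
    constructor
    rintro (a | a) h
    · exact G₁.irrefl h
    · exact G₂.irrefl h

open Function SimpleGraph Finset

section Coloring

variable {V : Type} {G : SimpleGraph V}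

def edgeColor (c : G.edgeSet → Fin 3) {x y : V} (h : G.Adj x y) : Fin 3 := c ⟨s(x, y), h⟩

lemma edgeColor_symm (c : G.edgeSet → Fin 3) {x y : V} (h : G.Adj x y) :
    edgeColor c h.symm = edgeColor c h := by
  simp only [edgeColor, Sym2.eq_swap]

lemma edgeColoring_ext {c c' : G.edgeSet → Fin 3}
    (h : ∀ ⦃x y : V⦄ (hxy : G.Adj x y), edgeColor c hxy = edgeColor c' hxy) : c = c' := by
  funext ⟨e, he⟩
  induction e using Sym2.ind with
  | h x y => exact h he

lemma isProper3EdgeColoring_iff {c : G.edgeSet → Fin 3} :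
    IsProper3EdgeColoring G c ↔ ∀ ⦃x y z : V⦄ (hy : G.Adj x y) (hz : G.Adj x z),
      y ≠ z → edgeColor c hy ≠ edgeColor c hz := by
  constructor
  · intro hc x y z hy hz hyz
    refine hc _ _ (fun h => hyz ?_) ⟨x, Sym2.mem_mk_left _ _, Sym2.mem_mk_left _ _⟩
    rcases Sym2.eq_iff.mp (congrArg Subtype.val h) with ⟨-, h⟩ | ⟨h₁, h₂⟩
    exacts [h, h₂.trans h₁]
  · rintro hc ⟨e₁, he₁⟩ ⟨e₂, he₂⟩ hne ⟨x, hx₁, hx₂⟩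
    obtain ⟨y, rfl⟩ := Sym2.mem_iff_exists.mp hx₁
    obtain ⟨z, rfl⟩ := Sym2.mem_iff_exists.mp hx₂
    exact hc he₁ he₂ fun hyz => hne (by subst hyz; rfl)

lemma IsProper3EdgeColoring.comp_perm {c : G.edgeSet → Fin 3} (hc : IsProper3EdgeColoring G c)
    (σ : Equiv.Perm (Fin 3)) : IsProper3EdgeColoring G (σ ∘ c) :=
  fun e₁ e₂ hne hx h => hc e₁ e₂ hne hx (σ.injective h)

open Classical in
noncomputable def coloringOfAdj (d : ∀ ⦃x y : V⦄, G.Adj x y → Fin 3)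
    (hd : ∀ ⦃x y : V⦄ (h : G.Adj x y), d h.symm = d h) : G.edgeSet → Fin 3 := fun e =>
  Sym2.lift ⟨fun x y => if h : G.Adj x y then d h else 0, fun x y => by
    dsimp only
    by_cases h : G.Adj x y
    · rw [dif_pos h, dif_pos h.symm, hd]
    · rw [dif_neg h, dif_neg (mt G.adj_symm h)]⟩ e.1

lemma edgeColor_coloringOfAdj (d : ∀ ⦃x y : V⦄, G.Adj x y → Fin 3)
    (hd : ∀ ⦃x y : V⦄ (h : G.Adj x y), d h.symm = d h) {x y : V} (h : G.Adj x y) :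
    edgeColor (coloringOfAdj d hd) h = d h :=
  dif_pos h

lemma isProper3EdgeColoring_coloringOfAdj {d : ∀ ⦃x y : V⦄, G.Adj x y → Fin 3}
    (hd : ∀ ⦃x y : V⦄ (h : G.Adj x y), d h.symm = d h)
    (hproper : ∀ ⦃x y z : V⦄ (hy : G.Adj x y) (hz : G.Adj x z), y ≠ z → d hy ≠ d hz) :
    IsProper3EdgeColoring G (coloringOfAdj d hd) := by
  rw [isProper3EdgeColoring_iff]
  simpa only [edgeColor_coloringOfAdj] using hproper

def incidentEdge (v : V) (u : G.neighborSet v) : G.edgeSet := ⟨s(v, u), u.2⟩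

lemma IsProper3EdgeColoring.injective_comp_incidentEdge {c : G.edgeSet → Fin 3}
    (hc : IsProper3EdgeColoring G c) (v : V) : Injective (c ∘ incidentEdge v) :=
  fun u u' h => by_contra fun hne =>
    isProper3EdgeColoring_iff.mp hc u.2 u'.2 (fun h' => hne (Subtype.ext h')) h

lemma IsProper3EdgeColoring.bijective_comp_incidentEdge {c : G.edgeSet → Fin 3}
    (hc : IsProper3EdgeColoring G c) {v : V} (hv : (G.neighborSet v).ncard = 3) :
    Bijective (c ∘ incidentEdge v) :=
  (hc.injective_comp_incidentEdge v).bijective_of_nat_card_le (by simp [hv])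

lemma IsProper3EdgeColoring.edgeColor_ne_incidentEdge {c : G.edgeSet → Fin 3}
    (hc : IsProper3EdgeColoring G c) {v x z : V} (hvx : G.Adj v x) (hxz : G.Adj x z)
    (hz : z ≠ v) : edgeColor c hxz ≠ c (incidentEdge v ⟨x, hvx⟩) := by
  rw [show c (incidentEdge v ⟨x, hvx⟩) = edgeColor c hvx.symm from (edgeColor_symm c hvx).symm]
  exact isProper3EdgeColoring_iff.mp hc hxz hvx.symm hz

open Classical in
noncomputable def extendAt (v : V) (β : G.neighborSet v → Fin 3)
    (d : ∀ ⦃x y : V⦄, G.Adj x y → x ≠ v → y ≠ v → Fin 3) ⦃x y : V⦄ (h : G.Adj x y) : Fin 3 :=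
  if hx : x = v then β ⟨y, hx ▸ h⟩ else if hy : y = v then β ⟨x, hy ▸ h.symm⟩ else d h hx hy

section ExtendAt

variable {v : V} {β : G.neighborSet v → Fin 3}
  {d : ∀ ⦃x y : V⦄, G.Adj x y → x ≠ v → y ≠ v → Fin 3}

lemma extendAt_incident (u : G.neighborSet v) : extendAt v β d (u.2 : G.Adj v u) = β u := by
  unfold extendAt
  rw [dif_pos rfl]

lemma extendAt_of_ne {x y : V} (h : G.Adj x y) (hx : x ≠ v) (hy : y ≠ v) :
    extendAt v β d h = d h hx hy := by
  rw [extendAt, dif_neg hx, dif_neg hy]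

lemma extendAt_symm (hd : ∀ ⦃x y : V⦄ (h : G.Adj x y) hx hy, d h.symm hy hx = d h hx hy)
    ⦃x y : V⦄ (h : G.Adj x y) : extendAt v β d h.symm = extendAt v β d h := by
  by_cases hx : x = v
  · subst hx
    rw [extendAt, dif_neg h.ne', dif_pos rfl, extendAt, dif_pos rfl]
  by_cases hy : y = v
  · subst hy
    rw [extendAt, dif_pos rfl, extendAt, dif_neg hx, dif_pos rfl]
  rw [extendAt_of_ne _ hy hx, extendAt_of_ne _ hx hy, hd]

lemma extendAt_ne (hβ : Injective β)
    (hd : ∀ ⦃x y z : V⦄ (hy : G.Adj x y) (hz : G.Adj x z) hx hy' hz',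
      y ≠ z → d hy hx hy' ≠ d hz hx hz')
    (hmix : ∀ ⦃x z : V⦄ (hvx : G.Adj v x) (hxz : G.Adj x z) hx hz, d hxz hx hz ≠ β ⟨x, hvx⟩)
    ⦃x y z : V⦄ (hy : G.Adj x y) (hz : G.Adj x z) (hyz : y ≠ z) :
    extendAt v β d hy ≠ extendAt v β d hz := by
  by_cases hx : x = v
  · subst hx
    rw [extendAt, dif_pos rfl, extendAt, dif_pos rfl]
    exact hβ.ne fun h => hyz (congrArg Subtype.val h)
  by_cases hyv : y = v
  · subst hyv
    rw [extendAt_of_ne hz hx (Ne.symm hyz), extendAt, dif_neg hx, dif_pos rfl]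
    exact (hmix _ _ _ _).symm
  by_cases hzv : z = v
  · subst hzv
    rw [extendAt_of_ne hy hx hyv, extendAt, dif_neg hx, dif_pos rfl]
    exact hmix _ _ _ _
  rw [extendAt_of_ne hy hx hyv, extendAt_of_ne hz hx hzv]
  exact hd _ _ _ _ _ hyz

lemma coloringOfAdj_extendAt_eq
    (hd : ∀ ⦃x y : V⦄ (h : G.Adj x y) hx hy, d h.symm hy hx = d h hx hy)
    {c : G.edgeSet → Fin 3} (hβ : ∀ u, c (incidentEdge v u) = β u)
    (hdc : ∀ ⦃x y : V⦄ (h : G.Adj x y) hx hy, d h hx hy = edgeColor c h) :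
    coloringOfAdj (extendAt v β d) (extendAt_symm hd) = c := by
  refine edgeColoring_ext fun x y h => ?_
  rw [edgeColor_coloringOfAdj]
  by_cases hx : x = v
  · subst hx
    exact (extendAt_incident ⟨y, h⟩).trans (hβ _).symm
  by_cases hy : y = v
  · subst hy
    rw [← extendAt_symm hd, extendAt_incident ⟨x, h.symm⟩, ← hβ, ← edgeColor_symm c h]
    rfl
  rw [extendAt_of_ne h hx hy, hdc]

end ExtendAt

abbrev FramedColoring (G : SimpleGraph V) {ι : Type} (e : ι → G.edgeSet) (β : ι → Fin 3) :=
  {c : G.edgeSet → Fin 3 // IsProper3EdgeColoring G c ∧ ∀ i, c (e i) = β i}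

lemma FramedColoring.bijective_toQuotient {ι : Type} {e : ι → G.edgeSet} (β : ι ≃ Fin 3)
    (he : ∀ c, IsProper3EdgeColoring G c → Bijective (c ∘ e)) :
    Bijective fun c : FramedColoring G e β => Quotient.mk (edgeColoringSetoid G) ⟨c.1, c.2.1⟩ := by
  constructor
  · intro ⟨c, _, hce⟩ ⟨c', _, hce'⟩ h
    obtain ⟨σ, hσ⟩ := Quotient.exact h
    have hσβ : ∀ i, σ (β i) = β i := fun i => by
      simpa [hce i, hce' i] using hσ (e i)
    have hσ1 : σ = 1 := Equiv.ext fun k => by simpa using hσβ (β.symm k)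
    exact Subtype.ext (funext fun x => by simpa [hσ1] using hσ x)
  · rintro ⟨c, hc⟩
    let σ := (Equiv.ofBijective _ (he c hc)).symm.trans β
    refine ⟨⟨σ ∘ c, hc.comp_perm σ, fun i => ?_⟩,
      Quotient.sound ((edgeColoringSetoid G).symm ⟨σ, fun _ => rfl⟩)⟩
    simpa [σ] using congrArg β ((Equiv.ofBijective _ (he c hc)).symm_apply_apply i)

lemma card_quotient_eq_card_framedColoring {ι : Type} {e : ι → G.edgeSet} (β : ι ≃ Fin 3)
    (he : ∀ c, IsProper3EdgeColoring G c → Bijective (c ∘ e)) :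
    Nat.card (Quotient (edgeColoringSetoid G)) = Nat.card (FramedColoring G e β) :=
  (Nat.card_eq_of_bijective _ (FramedColoring.bijective_toQuotient β he)).symm

/-- Otherwise the edges of color `k` inside `S` would form a perfect matching of `S`. -/
lemma IsProper3EdgeColoring.exists_adj_notMem_of_odd_card {c : G.edgeSet → Fin 3}
    (hc : IsProper3EdgeColoring G c) {S : Finset V} (hS : Odd #S) {k : Fin 3}
    (hk : ∀ x ∈ S, ∃ y, ∃ h : G.Adj x y, edgeColor c h = k) :
    ∃ x ∈ S, ∃ y ∉ S, ∃ h : G.Adj x y, edgeColor c h = k := by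
  by_contra! hout
  let H : SimpleGraph S :=
    { Adj x y := ∃ h : G.Adj x y, edgeColor c h = k
      symm := ⟨fun _ _ ⟨h, hk⟩ => ⟨h.symm, (edgeColor_symm c h).trans hk⟩⟩
      loopless := ⟨fun _ ⟨h, _⟩ => G.irrefl h⟩ }
  have hM : (⊤ : H.Subgraph).IsPerfectMatching := by
    rw [Subgraph.isPerfectMatching_iff]
    intro ⟨x, hx⟩
    obtain ⟨y, hxy, hcol⟩ := hk x hx
    have hy : y ∈ S := by_contra fun hy => hout x hx y hy hxy hcol
    refine ⟨⟨y, hy⟩, ⟨hxy, hcol⟩, fun ⟨z, hz⟩ ⟨hxz, hcol'⟩ => Subtype.ext (by_contra fun hne => ?_)⟩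
    exact isProper3EdgeColoring_iff.mp hc hxz hxy hne (hcol'.trans hcol.symm)
  have := hM.even_card
  rw [Fintype.card_coe] at this
  exact Nat.not_even_iff_odd.mpr hS this

lemma IsCubic.odd_card_ne [Fintype V] (hG : IsCubic G) (v : V) :
    Odd (Nat.card {x // x ≠ v}) := by
  classical
  have hdeg : ∀ w, G.degree w = 3 := fun w => by
    rw [← card_neighborSet_eq_degree, ← Nat.card_eq_fintype_card, Nat.card_coe_set_eq, hG w]
  have hodd : Odd 3 := by decide
  simpa [hdeg, hodd, Nat.card_eq_fintype_card, Fintype.card_subtype] using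
    G.odd_card_odd_degree_vertices_ne v (hdeg v ▸ hodd)

end Coloring

namespace YJoin

variable {V₁ V₂ : Type} {G₁ : SimpleGraph V₁} {G₂ : SimpleGraph V₂} {v₁ : V₁} {v₂ : V₂}
  (f : G₁.neighborSet v₁ ≃ G₂.neighborSet v₂)

lemma cutEdge_adj (u : G₁.neighborSet v₁) : (YJoin G₁ G₂ v₁ v₂ f).Adj
    (.inl ⟨u, (u.2 : G₁.Adj v₁ u).ne'⟩) (.inr ⟨f u, ((f u).2 : G₂.Adj v₂ (f u)).ne'⟩) :=
  ⟨u.2, rfl⟩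

def cutEdge (u : G₁.neighborSet v₁) : (YJoin G₁ G₂ v₁ v₂ f).edgeSet :=
  ⟨s(.inl ⟨u, (u.2 : G₁.Adj v₁ u).ne'⟩, .inr ⟨f u, ((f u).2 : G₂.Adj v₂ (f u)).ne'⟩),
    cutEdge_adj f u⟩

lemma edgeColor_inl_inr (c : (YJoin G₁ G₂ v₁ v₂ f).edgeSet → Fin 3) {a b}
    (h : (YJoin G₁ G₂ v₁ v₂ f).Adj (.inl a) (.inr b)) :
    edgeColor c h = c (cutEdge f ⟨a, h.fst⟩) := by
  obtain ⟨b, hb'⟩ := b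
  have hb : (f ⟨a, h.fst⟩ : V₂) = b := h.snd
  generalize h.fst = hm at hb ⊢
  subst hb
  rfl

lemma edgeColor_inr_inl (c : (YJoin G₁ G₂ v₁ v₂ f).edgeSet → Fin 3) {a b}
    (h : (YJoin G₁ G₂ v₁ v₂ f).Adj (.inr b) (.inl a)) : edgeColor c h = c (cutEdge f ⟨a, h.fst⟩) :=
  (edgeColor_symm c h.symm).trans (edgeColor_inl_inr f c h.symm)

open Classical in
noncomputable def neighborInl (a : {x // x ≠ v₁}) (u : G₁.neighborSet a) :
    (YJoin G₁ G₂ v₁ v₂ f).neighborSet (.inl a) :=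
  if hu : u.1 = v₁ then
    have ha : G₁.Adj v₁ a := by simpa [hu] using (u.2 : G₁.Adj a u).symm
    ⟨.inr ⟨f ⟨a, ha⟩, ((f ⟨a, ha⟩).2 : G₂.Adj v₂ _).ne'⟩, ⟨ha, rfl⟩⟩
  else ⟨.inl ⟨u, hu⟩, u.2⟩

lemma neighborInl_injective (a : {x // x ≠ v₁}) : Injective (neighborInl f a) := by
  intro u u' h
  have h' := congrArg Subtype.val h
  unfold neighborInl at h'
  by_cases hu : u.1 = v₁ <;> by_cases hu' : u'.1 = v₁ <;>
    simp only [hu, hu', dite_true, dite_false, reduceCtorEq, Sum.inl.injEq, Subtype.mk.injEq] at h'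
  · exact Subtype.ext (hu.trans hu'.symm)
  · exact Subtype.ext h'

lemma exists_edgeColor_inl_eq (hG₁ : IsCubic G₁) {c : (YJoin G₁ G₂ v₁ v₂ f).edgeSet → Fin 3}
    (hc : IsProper3EdgeColoring _ c) (a : {x // x ≠ v₁}) (k : Fin 3) :
    ∃ y, ∃ h : (YJoin G₁ G₂ v₁ v₂ f).Adj (.inl a) y, edgeColor c h = k := by
  have hinj := (hc.injective_comp_incidentEdge (.inl a)).comp (neighborInl_injective f a)
  have hcard : Nat.card (Fin 3) ≤ Nat.card (G₁.neighborSet a) := by simp [hG₁ a]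
  obtain ⟨u, hu⟩ := (hinj.bijective_of_nat_card_le hcard).2 k
  exact ⟨_, (neighborInl f a u).2, hu⟩

lemma bijective_comp_cutEdge [Fintype V₁] (hG₁ : IsCubic G₁)
    {c : (YJoin G₁ G₂ v₁ v₂ f).edgeSet → Fin 3} (hc : IsProper3EdgeColoring _ c) :
    Bijective (c ∘ cutEdge f) := by
  classical
  refine Surjective.bijective_of_nat_card_le (fun k => ?_)
    (by rw [Nat.card_coe_set_eq, hG₁ v₁, Nat.card_fin])
  have hS : Odd #(univ.map (Embedding.inl : {x // x ≠ v₁} ↪ _ ⊕ {y // y ≠ v₂})) := by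
    simpa [← Nat.card_eq_fintype_card] using hG₁.odd_card_ne v₁
  obtain ⟨_, hx, y, hy, hxy, hk⟩ := hc.exists_adj_notMem_of_odd_card hS (k := k) fun x hx => by
    obtain ⟨a, -, rfl⟩ := Finset.mem_map.mp hx
    exact exists_edgeColor_inl_eq f hG₁ hc a k
  obtain ⟨a, -, rfl⟩ := Finset.mem_map.mp hx
  cases y with
  | inl b => simp at hy
  | inr b => exact ⟨⟨a, hxy.fst⟩, (edgeColor_inl_inr f c hxy).symm.trans hk⟩

variable {β : G₁.neighborSet v₁ → Fin 3}

def leftPart (c : (YJoin G₁ G₂ v₁ v₂ f).edgeSet → Fin 3) ⦃x y : V₁⦄ (h : G₁.Adj x y)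
    (hx : x ≠ v₁) (hy : y ≠ v₁) : Fin 3 :=
  edgeColor c (show (YJoin G₁ G₂ v₁ v₂ f).Adj (.inl ⟨x, hx⟩) (.inl ⟨y, hy⟩) from h)

def rightPart (c : (YJoin G₁ G₂ v₁ v₂ f).edgeSet → Fin 3) ⦃x y : V₂⦄ (h : G₂.Adj x y)
    (hx : x ≠ v₂) (hy : y ≠ v₂) : Fin 3 :=
  edgeColor c (show (YJoin G₁ G₂ v₁ v₂ f).Adj (.inr ⟨x, hx⟩) (.inr ⟨y, hy⟩) from h)

lemma leftPart_symm (c : (YJoin G₁ G₂ v₁ v₂ f).edgeSet → Fin 3) ⦃x y : V₁⦄ (h : G₁.Adj x y)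
    (hx : x ≠ v₁) (hy : y ≠ v₁) : leftPart f c h.symm hy hx = leftPart f c h hx hy :=
  edgeColor_symm c _

lemma rightPart_symm (c : (YJoin G₁ G₂ v₁ v₂ f).edgeSet → Fin 3) ⦃x y : V₂⦄ (h : G₂.Adj x y)
    (hx : x ≠ v₂) (hy : y ≠ v₂) : rightPart f c h.symm hy hx = rightPart f c h hx hy :=
  edgeColor_symm c _

noncomputable def restrictLeft (hβ : Injective β)
    (c : FramedColoring (YJoin G₁ G₂ v₁ v₂ f) (cutEdge f) β) :
    FramedColoring G₁ (incidentEdge v₁) β := by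
  refine ⟨coloringOfAdj (extendAt v₁ β (leftPart f c.1)) (extendAt_symm (leftPart_symm f c.1)),
    isProper3EdgeColoring_coloringOfAdj _ (extendAt_ne hβ ?_ ?_),
    fun u => (edgeColor_coloringOfAdj _ _ _).trans (extendAt_incident u)⟩
  · intro x y z hy hz hx hy' hz' hyz
    exact isProper3EdgeColoring_iff.mp c.2.1 _ _ (by simpa using hyz)
  · intro x z hvx hxz hx hz
    rw [← c.2.2 ⟨x, hvx⟩]
    exact isProper3EdgeColoring_iff.mp c.2.1 (x := .inl ⟨x, hx⟩) (y := .inl ⟨z, hz⟩) hxz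
      (cutEdge_adj f ⟨x, hvx⟩) Sum.inl_ne_inr

noncomputable def restrictRight (hβ : Injective β)
    (c : FramedColoring (YJoin G₁ G₂ v₁ v₂ f) (cutEdge f) β) :
    FramedColoring G₂ (incidentEdge v₂ ∘ f) β := by
  refine ⟨coloringOfAdj (extendAt v₂ (β ∘ f.symm) (rightPart f c.1))
      (extendAt_symm (rightPart_symm f c.1)),
    isProper3EdgeColoring_coloringOfAdj _ (extendAt_ne (hβ.comp f.symm.injective) ?_ ?_),
    fun u => ?_⟩
  · intro x y z hy hz hx hy' hz' hyz
    exact isProper3EdgeColoring_iff.mp c.2.1 _ _ (by simpa using hyz)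
  · intro x z hvx hxz hx hz
    have hcut : (YJoin G₁ G₂ v₁ v₂ f).Adj
        (.inl ⟨_, ((f.symm ⟨x, hvx⟩).2 : G₁.Adj v₁ _).ne'⟩) (.inr ⟨x, hx⟩) :=
      ⟨(f.symm ⟨x, hvx⟩).2, by simp⟩
    rw [comp_apply, ← c.2.2, ← edgeColor_inr_inl f c.1 hcut.symm]
    exact isProper3EdgeColoring_iff.mp c.2.1 _ _ Sum.inr_ne_inl
  · exact (edgeColor_coloringOfAdj _ _ ((f u).2 : G₂.Adj v₂ (f u))).trans
      ((extendAt_incident (f u)).trans (by simp))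

lemma edgeColor_restrictLeft (hβ : Injective β)
    (c : FramedColoring (YJoin G₁ G₂ v₁ v₂ f) (cutEdge f) β) {x y : V₁} (h : G₁.Adj x y)
    (hx : x ≠ v₁) (hy : y ≠ v₁) : edgeColor (restrictLeft f hβ c).1 h = leftPart f c.1 h hx hy :=
  (edgeColor_coloringOfAdj _ (extendAt_symm (leftPart_symm f c.1)) h).trans
    (extendAt_of_ne h hx hy)

lemma edgeColor_restrictRight (hβ : Injective β)
    (c : FramedColoring (YJoin G₁ G₂ v₁ v₂ f) (cutEdge f) β) {x y : V₂} (h : G₂.Adj x y)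
    (hx : x ≠ v₂) (hy : y ≠ v₂) :
    edgeColor (restrictRight f hβ c).1 h = rightPart f c.1 h hx hy :=
  (edgeColor_coloringOfAdj _ (extendAt_symm (rightPart_symm f c.1)) h).trans
    (extendAt_of_ne h hx hy)

def glueAdj (c₁ : G₁.edgeSet → Fin 3) (c₂ : G₂.edgeSet → Fin 3) (β : G₁.neighborSet v₁ → Fin 3) :
    ∀ ⦃p q⦄, (YJoin G₁ G₂ v₁ v₂ f).Adj p q → Fin 3
  | .inl _, .inl _, h => edgeColor c₁ h
  | .inl a, .inr _, h => β ⟨a, h.fst⟩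
  | .inr _, .inl a, h => β ⟨a, h.fst⟩
  | .inr _, .inr _, h => edgeColor c₂ h

lemma glueAdj_symm (c₁ : G₁.edgeSet → Fin 3) (c₂ : G₂.edgeSet → Fin 3) ⦃p q⦄
    (h : (YJoin G₁ G₂ v₁ v₂ f).Adj p q) : glueAdj f c₁ c₂ β h.symm = glueAdj f c₁ c₂ β h := by
  rcases p with a | a <;> rcases q with b | b
  exacts [edgeColor_symm c₁ h, rfl, rfl, edgeColor_symm c₂ h]

lemma glueAdj_ne (c₁ : FramedColoring G₁ (incidentEdge v₁) β)
    (c₂ : FramedColoring G₂ (incidentEdge v₂ ∘ f) β) ⦃p q r⦄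
    (hq : (YJoin G₁ G₂ v₁ v₂ f).Adj p q) (hr : (YJoin G₁ G₂ v₁ v₂ f).Adj p r) (hqr : q ≠ r) :
    glueAdj f c₁.1 c₂.1 β hq ≠ glueAdj f c₁.1 c₂.1 β hr := by
  have left {a b : {x // x ≠ v₁}} (hab : G₁.Adj a b) (hm : a.1 ∈ G₁.neighborSet v₁) :
      edgeColor c₁.1 hab ≠ β ⟨a, hm⟩ := by
    rw [← c₁.2.2]
    exact c₁.2.1.edgeColor_ne_incidentEdge hm hab b.2
  have right {a b' : {y // y ≠ v₂}} {b : V₁} (hab' : G₂.Adj a b')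
      (hm : b ∈ G₁.neighborSet v₁) (hba : (f ⟨b, hm⟩ : V₂) = a) :
      edgeColor c₂.1 hab' ≠ β ⟨b, hm⟩ := by
    obtain ⟨a, ha⟩ := a
    subst hba
    rw [← c₂.2.2]
    exact c₂.2.1.edgeColor_ne_incidentEdge (f ⟨b, hm⟩).2 hab' b'.2
  rcases p with a | a <;> rcases q with b | b <;> rcases r with b' | b'
  · exact isProper3EdgeColoring_iff.mp c₁.2.1 hq hr fun h => hqr (congrArg _ (Subtype.ext h))
  · exact left hq hr.fst
  · exact (left hr hq.fst).symm
  · exact absurd (congrArg Sum.inr (Subtype.ext (hq.snd.symm.trans hr.snd))) hqr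
  · have hbb' := congrArg Subtype.val (f.injective (Subtype.ext (hq.snd.trans hr.snd.symm)))
    exact absurd (congrArg Sum.inl (Subtype.ext hbb' : b = b')) hqr
  · exact (right hr hq.fst hq.snd).symm
  · exact right hq hr.fst hr.snd
  · exact isProper3EdgeColoring_iff.mp c₂.2.1 hq hr fun h => hqr (congrArg _ (Subtype.ext h))

noncomputable def glue (c₁ : FramedColoring G₁ (incidentEdge v₁) β)
    (c₂ : FramedColoring G₂ (incidentEdge v₂ ∘ f) β) :
    FramedColoring (YJoin G₁ G₂ v₁ v₂ f) (cutEdge f) β :=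
  ⟨coloringOfAdj (glueAdj f c₁.1 c₂.1 β) (glueAdj_symm f c₁.1 c₂.1),
    isProper3EdgeColoring_coloringOfAdj _ (glueAdj_ne f c₁ c₂),
    fun u => edgeColor_coloringOfAdj _ _ (cutEdge_adj f u)⟩

noncomputable def framedEquiv (hβ : Injective β) :
    FramedColoring (YJoin G₁ G₂ v₁ v₂ f) (cutEdge f) β ≃
      FramedColoring G₁ (incidentEdge v₁) β × FramedColoring G₂ (incidentEdge v₂ ∘ f) β where
  toFun c := (restrictLeft f hβ c, restrictRight f hβ c)
  invFun c := glue f c.1 c.2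
  left_inv c := by
    refine Subtype.ext (edgeColoring_ext fun p q h =>
      (edgeColor_coloringOfAdj (glueAdj f _ _ β) (glueAdj_symm f _ _) h).trans ?_)
    rcases p with a | a <;> rcases q with b | b
    · exact edgeColor_restrictLeft f hβ c (x := a.1) (y := b.1) h a.2 b.2
    · exact (c.2.2 _).symm.trans (edgeColor_inl_inr f c.1 h).symm
    · exact (c.2.2 _).symm.trans (edgeColor_inr_inl f c.1 h).symm
    · exact edgeColor_restrictRight f hβ c (x := a.1) (y := b.1) h a.2 b.2
  right_inv c := by
    refine Prod.ext (Subtype.ext ?_) (Subtype.ext ?_)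
    · exact coloringOfAdj_extendAt_eq (leftPart_symm f _) c.1.2.2 fun x y h hx hy =>
        edgeColor_coloringOfAdj _ (glueAdj_symm f _ _) _
    · refine coloringOfAdj_extendAt_eq (rightPart_symm f _) (fun w => ?_) fun x y h hx hy =>
        edgeColor_coloringOfAdj _ (glueAdj_symm f _ _) _
      simpa using c.2.2.2 (f.symm w)

end YJoin

theorem yjoin_coloring_count_general {V₁ V₂ : Type} [Fintype V₁]
    (G₁ : SimpleGraph V₁) (G₂ : SimpleGraph V₂)
    (hcubic₁ : IsCubic G₁) (hcubic₂ : IsCubic G₂)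
    (v₁ : V₁) (v₂ : V₂) (f : G₁.neighborSet v₁ ≃ G₂.neighborSet v₂)
    (a₁ a₂ : ℕ)
    (h₁ : Nat.card (Quotient (edgeColoringSetoid G₁)) = a₁)
    (h₂ : Nat.card (Quotient (edgeColoringSetoid G₂)) = a₂) :
    Nat.card (Quotient (edgeColoringSetoid (YJoin G₁ G₂ v₁ v₂ f))) = a₁ * a₂ := by
  obtain ⟨β⟩ : Nonempty (G₁.neighborSet v₁ ≃ Fin 3) := by
    rw [← Finite.card_eq, Nat.card_coe_set_eq, hcubic₁ v₁, Nat.card_fin]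
  subst h₁ h₂
  rw [card_quotient_eq_card_framedColoring β fun _ hc => YJoin.bijective_comp_cutEdge f hcubic₁ hc,
    card_quotient_eq_card_framedColoring (e := incidentEdge v₁) β
      fun _ hc => hc.bijective_comp_incidentEdge (hcubic₁ v₁),
    card_quotient_eq_card_framedColoring (e := incidentEdge v₂ ∘ f) β
      fun _ hc => (hc.bijective_comp_incidentEdge (hcubic₂ v₂)).comp f.bijective,
    ← Nat.card_prod]
  exact Nat.card_congr (YJoin.framedEquiv f β.injective)

/-- if `G₁` has exactly `a₁` and `G₂` exactly `a₂` proper 3-edge colorings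
up to permutation of the colors, then their Y-join has exactly `a₁ * a₂` proper 3-edge
colorings up to permutation of the colors. -/
theorem yjoin_coloring_count {V₁ V₂ : Type} [Fintype V₁] [Fintype V₂]
    (G₁ : SimpleGraph V₁) (G₂ : SimpleGraph V₂)
    (hcubic₁ : IsCubic G₁) (hcubic₂ : IsCubic G₂)
    (v₁ : V₁) (v₂ : V₂) (f : G₁.neighborSet v₁ ≃ G₂.neighborSet v₂)
    (a₁ a₂ : ℕ)
    (h₁ : Nat.card (Quotient (edgeColoringSetoid G₁)) = a₁)
    (h₂ : Nat.card (Quotient (edgeColoringSetoid G₂)) = a₂) :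
    Nat.card (Quotient (edgeColoringSetoid (YJoin G₁ G₂ v₁ v₂ f))) = a₁ * a₂ :=
  yjoin_coloring_count_general G₁ G₂ hcubic₁ hcubic₂ v₁ v₂ f a₁ a₂ h₁ h₂
end

section
/- Let G1 and G2 be finite simple cubic graphs, each uniquely 3-edge colorable, let v1 be a vertex of G1 and v2 a vertex of G2, and let f be a bijection from the neighborhood of v1 to the neighborhood of v2. Then the Y-join of G1 and G2 (formed using v1, v2, f) is uniquely 3-edge colorable. -/
/-- Uniquely 3-edge colorable: a proper 3-edge coloring exists, and any two proper
3-edge colorings induce the same partition of the edge set into color classes. -/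
def Uniquely3EdgeColorable {V : Type} (G : SimpleGraph V) : Prop :=
  (∃ c : G.edgeSet → Fin 3, IsProper3EdgeColoring G c) ∧
  ∀ c₁ c₂ : G.edgeSet → Fin 3, IsProper3EdgeColoring G c₁ → IsProper3EdgeColoring G c₂ →
    ∀ e e' : G.edgeSet, (c₁ e = c₁ e' ↔ c₂ e = c₂ e')

open Function in
lemma even_card_of_involutive {α : Type} [Finite α] (g : α → α)
    (hg : Involutive g) (hfix : ∀ a, g a ≠ a) : Even (Nat.card α) := by
  classical
  have : Fintype α := Fintype.ofFinite α
  rw [Nat.card_eq_fintype_card]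
  have hfact : Fact (Nat.Prime 2) := ⟨Nat.prime_two⟩
  set f : Function.End α := g with hf
  have h1 : f ^ (2:ℕ) ^ (1:ℕ) = 1 := by
    show f * f = 1
    funext a
    exact hg a
  have h2 := Equiv.Perm.card_fixedPoints_modEq (f := f) h1
  have h3 : f.fixedPoints = ∅ := by
    ext a; simp [Function.IsFixedPt, fixedPoints, hfix a, hf]; exact hfix a
  have h4 : Fintype.card f.fixedPoints = 0 := by
    simp [h3]
  rw [h4] at h2
  have := (Nat.modEq_zero_iff_dvd).1 h2
  exact (even_iff_two_dvd).2 this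

/-- adjacency form of properness -/
def ProperAdj {V : Type} (G : SimpleGraph V) (c : G.edgeSet → Fin 3) : Prop :=
  ∀ x y z : V, ∀ (hxy : G.Adj x y) (hxz : G.Adj x z), y ≠ z →
    c ⟨s(x,y), hxy⟩ ≠ c ⟨s(x,z), hxz⟩

lemma sxy_eq_iff {V : Type} {x y z : V} : s(x,y) = s(x,z) ↔ y = z := by
  rw [Sym2.eq_iff]; constructor
  · rintro (⟨-, h⟩ | ⟨h1, h2⟩); · exact h
    · rw [h2, h1]
  · tauto

lemma proper_iff_properAdj {V : Type} (G : SimpleGraph V) (c : G.edgeSet → Fin 3) :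
    IsProper3EdgeColoring G c ↔ ProperAdj G c := by
  constructor
  · intro hp x y z hxy hxz hyz
    apply hp _ _ (fun h => hyz (sxy_eq_iff.1 (congrArg Subtype.val h)))
    exact ⟨x, by simp, by simp⟩
  · intro hp e₁ e₂ hne ⟨v, hv1, hv2⟩
    obtain ⟨e₁, he₁⟩ := e₁
    obtain ⟨e₂, he₂⟩ := e₂
    induction e₁ using Sym2.ind with | _ a b =>
    induction e₂ using Sym2.ind with | _ u w =>
    simp only [Sym2.mem_iff] at hv1 hv2
    have hne' : s(a,b) ≠ s(u,w) := fun h => hne (Subtype.ext h)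
    -- normalize so that v is first in both
    obtain ⟨b', hb'⟩ : ∃ b', s(a,b) = s(v,b') := by
      rcases hv1 with rfl | rfl
      exacts [⟨b, rfl⟩, ⟨a, Sym2.eq_swap⟩]
    obtain ⟨w', hw'⟩ : ∃ w', s(u,w) = s(v,w') := by
      rcases hv2 with rfl | rfl
      exacts [⟨w, rfl⟩, ⟨u, Sym2.eq_swap⟩]
    have hadj1 : G.Adj v b' := by rw [← G.mem_edgeSet, ← hb']; exact he₁
    have hadj2 : G.Adj v w' := by rw [← G.mem_edgeSet, ← hw']; exact he₂
    have hbw : b' ≠ w' := by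
      intro h; apply hne'; rw [hb', hw', h]
    have := hp v b' w' hadj1 hadj2 hbw
    convert this using 2 <;> simp [hb', hw']

lemma even_card_of_cubic {V : Type} [Fintype V] (G : SimpleGraph V) (h : IsCubic G) :
    Even (Fintype.card V) := by
  classical
  have hdeg : ∀ v, G.degree v = 3 := by
    intro v
    have := h v
    rw [Set.ncard_eq_toFinset_card'] at this
    rwa [SimpleGraph.degree, SimpleGraph.neighborFinset_def]
  have hsum := SimpleGraph.sum_degrees_eq_twice_card_edges G
  rw [Finset.sum_congr rfl (fun v _ => hdeg v), Finset.sum_const, smul_eq_mul] at hsum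
  simp only [Finset.card_univ] at hsum
  rw [Nat.even_iff]
  omega

lemma exists_color_nbr {V : Type} [Fintype V] {G : SimpleGraph V} (hcubic : IsCubic G)
    {c : G.edgeSet → Fin 3} (hc : ProperAdj G c) (w : V) (i : Fin 3) :
    ∃ u, ∃ h : G.Adj w u, c ⟨s(w,u), h⟩ = i := by
  classical
  set S := G.neighborSet w with hS
  let F : S → Fin 3 := fun n => c ⟨s(w, n.1), n.2⟩
  have hinj : Function.Injective F := by
    intro n m hnm
    by_contra hne
    exact hc w n.1 m.1 n.2 m.2 (fun h => hne (Subtype.ext h)) hnm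
  have hcard : Fintype.card S = 3 := by
    have h3 := hcubic w
    rw [Set.ncard_eq_toFinset_card'] at h3
    rwa [← Set.toFinset_card]
  have hbij : Function.Bijective F :=
    (Fintype.bijective_iff_injective_and_card F).2 ⟨hinj, by simp [hcard]⟩
  obtain ⟨n, hn⟩ := hbij.2 i
  exact ⟨n.1, n.2, hn⟩

section YJ
variable {V₁ V₂ : Type} [Fintype V₁] [Fintype V₂]
    {G₁ : SimpleGraph V₁} {G₂ : SimpleGraph V₂} {v₁ : V₁} {v₂ : V₂}
    (f : G₁.neighborSet v₁ ≃ G₂.neighborSet v₂)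

local notation "Gj" => YJoin G₁ G₂ v₁ v₂ f
open scoped Classical

lemma fne (h : G₁.Adj v₁ u) : (f ⟨u, h⟩ : V₂) ≠ v₂ :=
  ((f ⟨u, h⟩).2 : G₂.Adj v₂ _).ne'

lemma yjoin_cubic (hcubic₁ : IsCubic G₁) (hcubic₂ : IsCubic G₂) :
    IsCubic (YJoin G₁ G₂ v₁ v₂ f) := by
  classical
  set G := YJoin G₁ G₂ v₁ v₂ f with hG
  rintro (a | b)
  · -- left vertex
    let φ : ({x : V₁ // x ≠ v₁} ⊕ {y : V₂ // y ≠ v₂}) → V₁ := fun p =>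
      match p with | .inl b => b.1 | .inr _ => v₁
    have hbij : Set.BijOn φ (G.neighborSet (.inl a)) (G₁.neighborSet a.1) := by
      refine ⟨?_, ?_, ?_⟩
      · rintro (b | y) hn
        · exact (hn : G₁.Adj a.1 b.1).symm.symm
        · obtain ⟨h, -⟩ := (hn : ∃ h : a.1 ∈ G₁.neighborSet v₁, _)
          exact (h : G₁.Adj v₁ a.1).symm
      · rintro (b | y) hb (b' | y') hb' heq
        · exact congrArg Sum.inl (Subtype.ext heq)
        · exact absurd heq b.2
        · exact absurd heq.symm b'.2
        · obtain ⟨h, h1⟩ := (hb : ∃ h : a.1 ∈ G₁.neighborSet v₁, _)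
          obtain ⟨h', h2⟩ := (hb' : ∃ h : a.1 ∈ G₁.neighborSet v₁, _)
          exact congrArg Sum.inr (Subtype.ext (h1 ▸ h2 ▸ rfl))
      · intro u hu
        by_cases huv : u = v₁
        · have h : a.1 ∈ G₁.neighborSet v₁ := huv ▸ (hu : G₁.Adj a.1 u).symm
          refine ⟨.inr ⟨(f ⟨a.1, h⟩ : V₂), fne f h⟩, ⟨h, rfl⟩, huv.symm⟩
        · exact ⟨.inl ⟨u, huv⟩, (hu : G₁.Adj a.1 u), rfl⟩
    calc (G.neighborSet (.inl a)).ncard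
        = (φ '' G.neighborSet (.inl a)).ncard := (Set.ncard_image_of_injOn hbij.2.1).symm
      _ = (G₁.neighborSet a.1).ncard := by rw [hbij.image_eq]
      _ = 3 := hcubic₁ a.1
  · -- right vertex
    let φ : ({x : V₁ // x ≠ v₁} ⊕ {y : V₂ // y ≠ v₂}) → V₂ := fun p =>
      match p with | .inr y => y.1 | .inl _ => v₂
    have hbij : Set.BijOn φ (G.neighborSet (.inr b)) (G₂.neighborSet b.1) := by
      refine ⟨?_, ?_, ?_⟩
      · rintro (a | y) hn
        · obtain ⟨h, h1⟩ := (hn : ∃ h : a.1 ∈ G₁.neighborSet v₁, _)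
          exact (h1 ▸ (f ⟨a.1, h⟩).2 : G₂.Adj v₂ b.1).symm
        · exact (hn : G₂.Adj b.1 y.1).symm.symm
      · rintro (x | y) hx (x' | y') hx' heq
        · obtain ⟨h, h1⟩ := (hx : ∃ h : x.1 ∈ G₁.neighborSet v₁, _)
          obtain ⟨h', h2⟩ := (hx' : ∃ h : x'.1 ∈ G₁.neighborSet v₁, _)
          have : f ⟨x.1, h⟩ = f ⟨x'.1, h'⟩ := Subtype.ext (h1.trans h2.symm)
          have := congrArg Subtype.val (f.injective this)
          exact congrArg Sum.inl (Subtype.ext this)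
        · exact absurd heq.symm y'.2
        · exact absurd heq y.2
        · exact congrArg Sum.inr (Subtype.ext heq)
      · intro u hu
        by_cases huv : u = v₂
        · have h : b.1 ∈ G₂.neighborSet v₂ := huv ▸ (hu : G₂.Adj b.1 u).symm
          set x := f.symm ⟨b.1, h⟩ with hx
          have hxne : x.1 ≠ v₁ := (x.2 : G₁.Adj v₁ x.1).ne'
          refine ⟨.inl ⟨x.1, hxne⟩, ⟨x.2, ?_⟩, huv.symm⟩
          show (f ⟨x.1, x.2⟩ : V₂) = b.1
          have : f ⟨x.1, x.2⟩ = f x := by rfl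
          rw [this, hx, Equiv.apply_symm_apply]
        · exact ⟨.inr ⟨u, huv⟩, (hu : G₂.Adj b.1 u), rfl⟩
    calc (G.neighborSet (.inr b)).ncard
        = (φ '' G.neighborSet (.inr b)).ncard := (Set.ncard_image_of_injOn hbij.2.1).symm
      _ = (G₂.neighborSet b.1).ncard := by rw [hbij.image_eq]
      _ = 3 := hcubic₂ b.1

def crossEdge {u : V₁} (h : G₁.Adj v₁ u) : (YJoin G₁ G₂ v₁ v₂ f).edgeSet :=
  ⟨s(.inl ⟨u, h.ne'⟩, .inr ⟨(f ⟨u, h⟩ : V₂), fne f h⟩), ⟨h, rfl⟩⟩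

lemma card_compl_v₁_odd (hcubic₁ : IsCubic G₁) :
    ¬ Even (Nat.card {x : V₁ // x ≠ v₁}) := by
  classical
  have heven := even_card_of_cubic G₁ hcubic₁
  have h1 : Nat.card {x : V₁ // x ≠ v₁} = Nat.card V₁ - 1 := by
    have e : {x : V₁ // x ≠ v₁} ≃ (({v₁}ᶜ : Set V₁)) :=
      Equiv.subtypeEquivRight (fun x => by simp)
    rw [Nat.card_congr e, Nat.card_coe_set_eq]
    have h2 := Set.ncard_add_ncard_compl ({v₁} : Set V₁)
    rw [Set.ncard_singleton] at h2
    omega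
  have h2 : 1 ≤ Nat.card V₁ := Nat.card_pos_iff.2 ⟨⟨v₁⟩, inferInstance⟩
  rw [h1]
  rw [Nat.card_eq_fintype_card] at h2 ⊢
  rw [Nat.even_iff] at *
  omega

lemma cross_surj (hcubic₁ : IsCubic G₁) (hcubic₂ : IsCubic G₂)
    {c : (YJoin G₁ G₂ v₁ v₂ f).edgeSet → Fin 3}
    (hc : ProperAdj (YJoin G₁ G₂ v₁ v₂ f) c) (i : Fin 3) :
    ∃ (u : V₁) (h : G₁.Adj v₁ u), c (crossEdge f h) = i := by
  classical
  by_contra hno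
  push_neg at hno
  have hGcubic : IsCubic Gj := yjoin_cubic f hcubic₁ hcubic₂
  have H : ∀ a : {x : V₁ // x ≠ v₁}, ∃ b : {x : V₁ // x ≠ v₁},
      ∃ hadj : (Gj).Adj (.inl a) (.inl b), c ⟨s(.inl a, .inl b), hadj⟩ = i := by
    intro a
    obtain ⟨n, hadj, hcol⟩ := exists_color_nbr hGcubic hc (.inl a) i
    rcases n with b | y
    · exact ⟨b, hadj, hcol⟩
    · exfalso
      have hadj' := hadj
      obtain ⟨h, heq⟩ := (hadj : ∃ h : a.1 ∈ G₁.neighborSet v₁, (f ⟨a.1, h⟩ : V₂) = y.1)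
      apply hno a.1 h
      have hedge : (⟨s(.inl a, .inr y), hadj'⟩ : (Gj).edgeSet) = crossEdge f h := by
        apply Subtype.ext
        show s(Sum.inl a, Sum.inr y) = s(Sum.inl ⟨a.1, (h : G₁.Adj v₁ a.1).ne'⟩,
          (Sum.inr ⟨(f ⟨a.1, h⟩ : V₂), fne f h⟩ : {x : V₁ // x ≠ v₁} ⊕ {y : V₂ // y ≠ v₂}))
        have hy : y = ⟨(f ⟨a.1, h⟩ : V₂), fne f h⟩ := Subtype.ext heq.symm
        rw [hy]
      rw [← hedge]
      exact hcol
  choose g hadj hcol using H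
  have hinvol : Function.Involutive g := by
    intro a
    by_contra hne
    have h1 : (Gj).Adj (.inl (g a)) (.inl (g (g a))) := hadj (g a)
    have h2 : (Gj).Adj (.inl (g a)) (.inl a) := (hadj a).symm
    have hnn : (Sum.inl (g (g a)) : {x : V₁ // x ≠ v₁} ⊕ {y : V₂ // y ≠ v₂}) ≠ .inl a := by
      intro h; exact hne (by injection h)
    apply hc (.inl (g a)) (.inl (g (g a))) (.inl a) h1 h2 hnn
    rw [hcol (g a)]
    have : (⟨s(.inl (g a), .inl a), h2⟩ : (Gj).edgeSet) = ⟨s(.inl a, .inl (g a)), hadj a⟩ :=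
      Subtype.ext (Sym2.eq_swap)
    rw [this, hcol a]
  have hnofix : ∀ a, g a ≠ a := by
    intro a h
    have := hadj a
    rw [h] at this
    exact (Gj).loopless.irrefl _ this
  exact card_compl_v₁_odd hcubic₁ (even_card_of_involutive g hinvol hnofix)

lemma cross_inj (hcubic₁ : IsCubic G₁) (hcubic₂ : IsCubic G₂)
    {c : (YJoin G₁ G₂ v₁ v₂ f).edgeSet → Fin 3}
    (hc : ProperAdj (YJoin G₁ G₂ v₁ v₂ f) c)
    {u u' : V₁} (h : G₁.Adj v₁ u) (h' : G₁.Adj v₁ u') (hne : u ≠ u') :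
    c (crossEdge f h) ≠ c (crossEdge f h') := by
  classical
  set F : G₁.neighborSet v₁ → Fin 3 := fun n => c (crossEdge f n.2) with hF
  have hsurj : Function.Surjective F := by
    intro i
    obtain ⟨u, hu, hcu⟩ := cross_surj f hcubic₁ hcubic₂ hc i
    exact ⟨⟨u, hu⟩, hcu⟩
  have hcard : Fintype.card (G₁.neighborSet v₁) = 3 := by
    have h3 := hcubic₁ v₁
    rw [Set.ncard_eq_toFinset_card'] at h3
    rwa [← Set.toFinset_card]
  have hbij : Function.Bijective F :=
    (Fintype.bijective_iff_surjective_and_card F).2 ⟨hsurj, by simp [hcard]⟩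
  intro hcc
  exact hne (congrArg Subtype.val (hbij.1 (a₁ := ⟨u, h⟩) (a₂ := ⟨u', h'⟩) hcc))

noncomputable def crossC (c : (YJoin G₁ G₂ v₁ v₂ f).edgeSet → Fin 3) (u : V₁) : Fin 3 :=
  if h : G₁.Adj v₁ u then c (crossEdge f h) else 0

noncomputable def ind1 (c : (YJoin G₁ G₂ v₁ v₂ f).edgeSet → Fin 3) (e : G₁.edgeSet) : Fin 3 :=
  Sym2.lift ⟨fun x y =>
    if hx : x = v₁ then crossC f c y
    else if hy : y = v₁ then crossC f c x
    else (if h : (Gj).Adj (Sum.inl ⟨x, hx⟩) (Sum.inl ⟨y, hy⟩) then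
        c ⟨s(Sum.inl ⟨x, hx⟩, Sum.inl ⟨y, hy⟩), h⟩ else 0),
   by
    intro x y
    by_cases hx : x = v₁ <;> by_cases hy : y = v₁
    · simp [hx, hy]
    · simp [hx, hy]
    · simp [hx, hy]
    · simp only [dif_neg hx, dif_neg hy]
      by_cases h : (Gj).Adj (Sum.inl ⟨x, hx⟩) (Sum.inl ⟨y, hy⟩)
      · rw [dif_pos h, dif_pos h.symm]
        exact congrArg c (Subtype.ext Sym2.eq_swap)
      · rw [dif_neg h, dif_neg (fun h' => h h'.symm)]⟩ e.1

lemma ind1_cross (c : (YJoin G₁ G₂ v₁ v₂ f).edgeSet → Fin 3) {u : V₁} (h : G₁.Adj v₁ u) :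
    ind1 f c ⟨s(v₁, u), h⟩ = c (crossEdge f h) := by
  show (if hx : v₁ = v₁ then crossC f c u else _) = _
  rw [dif_pos rfl, crossC, dif_pos h]

lemma ind1_cross' (c : (YJoin G₁ G₂ v₁ v₂ f).edgeSet → Fin 3) {u : V₁} (h : G₁.Adj u v₁) :
    ind1 f c ⟨s(u, v₁), h⟩ = c (crossEdge f h.symm) := by
  have : (⟨s(u, v₁), h⟩ : G₁.edgeSet) = ⟨s(v₁, u), h.symm⟩ := Subtype.ext Sym2.eq_swap
  rw [this, ind1_cross]

lemma ind1_inl (c : (YJoin G₁ G₂ v₁ v₂ f).edgeSet → Fin 3) {x y : V₁}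
    (hx : x ≠ v₁) (hy : y ≠ v₁)
    (hadj : (YJoin G₁ G₂ v₁ v₂ f).Adj (Sum.inl ⟨x, hx⟩) (Sum.inl ⟨y, hy⟩)) :
    ind1 f c ⟨s(x, y), hadj⟩ = c ⟨s(Sum.inl ⟨x, hx⟩, Sum.inl ⟨y, hy⟩), hadj⟩ := by
  show (if hx' : x = v₁ then _ else if hy' : y = v₁ then _
    else (if h : (Gj).Adj (Sum.inl ⟨x, hx'⟩) (Sum.inl ⟨y, hy'⟩) then
        c ⟨s(Sum.inl ⟨x, hx'⟩, Sum.inl ⟨y, hy'⟩), h⟩ else 0)) = _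
  rw [dif_neg hx, dif_neg hy, dif_pos hadj]

noncomputable def cross2C (c : (YJoin G₁ G₂ v₁ v₂ f).edgeSet → Fin 3) (u : V₂) : Fin 3 :=
  if h : G₂.Adj v₂ u then c (crossEdge f (f.symm ⟨u, h⟩).2) else 0

noncomputable def ind2 (c : (YJoin G₁ G₂ v₁ v₂ f).edgeSet → Fin 3) (e : G₂.edgeSet) : Fin 3 :=
  Sym2.lift ⟨fun x y =>
    if hx : x = v₂ then cross2C f c y
    else if hy : y = v₂ then cross2C f c x
    else (if h : (Gj).Adj (Sum.inr ⟨x, hx⟩) (Sum.inr ⟨y, hy⟩) then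
        c ⟨s(Sum.inr ⟨x, hx⟩, Sum.inr ⟨y, hy⟩), h⟩ else 0),
   by
    intro x y
    by_cases hx : x = v₂ <;> by_cases hy : y = v₂
    · simp [hx, hy]
    · simp [hx, hy]
    · simp [hx, hy]
    · simp only [dif_neg hx, dif_neg hy]
      by_cases h : (Gj).Adj (Sum.inr ⟨x, hx⟩) (Sum.inr ⟨y, hy⟩)
      · rw [dif_pos h, dif_pos h.symm]
        exact congrArg c (Subtype.ext Sym2.eq_swap)
      · rw [dif_neg h, dif_neg (fun h' => h h'.symm)]⟩ e.1

lemma ind2_cross (c : (YJoin G₁ G₂ v₁ v₂ f).edgeSet → Fin 3) {u : V₂} (h : G₂.Adj v₂ u) :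
    ind2 f c ⟨s(v₂, u), h⟩ = c (crossEdge f (f.symm ⟨u, h⟩).2) := by
  show (if hx : v₂ = v₂ then cross2C f c u else _) = _
  rw [dif_pos rfl, cross2C, dif_pos h]

lemma ind2_cross' (c : (YJoin G₁ G₂ v₁ v₂ f).edgeSet → Fin 3) {u : V₂} (h : G₂.Adj u v₂) :
    ind2 f c ⟨s(u, v₂), h⟩ = c (crossEdge f (f.symm ⟨u, h.symm⟩).2) := by
  have : (⟨s(u, v₂), h⟩ : G₂.edgeSet) = ⟨s(v₂, u), h.symm⟩ := Subtype.ext Sym2.eq_swap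
  rw [this, ind2_cross]

lemma ind2_inr (c : (YJoin G₁ G₂ v₁ v₂ f).edgeSet → Fin 3) {x y : V₂}
    (hx : x ≠ v₂) (hy : y ≠ v₂)
    (hadj : (YJoin G₁ G₂ v₁ v₂ f).Adj (Sum.inr ⟨x, hx⟩) (Sum.inr ⟨y, hy⟩)) :
    ind2 f c ⟨s(x, y), hadj⟩ = c ⟨s(Sum.inr ⟨x, hx⟩, Sum.inr ⟨y, hy⟩), hadj⟩ := by
  show (if hx' : x = v₂ then _ else if hy' : y = v₂ then _
    else (if h : (Gj).Adj (Sum.inr ⟨x, hx'⟩) (Sum.inr ⟨y, hy'⟩) then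
        c ⟨s(Sum.inr ⟨x, hx'⟩, Sum.inr ⟨y, hy'⟩), h⟩ else 0)) = _
  rw [dif_neg hx, dif_neg hy, dif_pos hadj]

lemma crossEdge_symm_eval (c : (YJoin G₁ G₂ v₁ v₂ f).edgeSet → Fin 3)
    {u : V₁} (h : G₁.Adj v₁ u) {h' : G₂.Adj v₂ (f ⟨u, h⟩ : V₂)} :
    c (crossEdge f (f.symm ⟨(f ⟨u, h⟩ : V₂), h'⟩).2) = c (crossEdge f h) := by
  have key : ∀ (x : G₁.neighborSet v₁), x = ⟨u, h⟩ →
      c (crossEdge f x.2) = c (crossEdge f h) := by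
    rintro x rfl; rfl
  exact key _ (by rw [show (⟨(f ⟨u, h⟩ : V₂), h'⟩ : G₂.neighborSet v₂) = f ⟨u, h⟩ from
    Subtype.ext rfl, Equiv.symm_apply_apply])

lemma ind2_cross_eq (c : (YJoin G₁ G₂ v₁ v₂ f).edgeSet → Fin 3)
    {u : V₁} (h : G₁.Adj v₁ u) :
    ind2 f c ⟨s(v₂, (f ⟨u, h⟩ : V₂)), (f ⟨u, h⟩).2⟩ = c (crossEdge f h) := by
  refine (ind2_cross f c (f ⟨u, h⟩).2).trans ?_
  exact crossEdge_symm_eval f c h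

lemma ind1_proper (hcubic₁ : IsCubic G₁) (hcubic₂ : IsCubic G₂)
    {c : (YJoin G₁ G₂ v₁ v₂ f).edgeSet → Fin 3}
    (hc : ProperAdj (YJoin G₁ G₂ v₁ v₂ f) c) : ProperAdj G₁ (ind1 f c) := by
  have hcP : IsProper3EdgeColoring (Gj) c := (proper_iff_properAdj _ _).2 hc
  intro x y z hxy hxz hyz
  by_cases hx : x = v₁
  · subst hx
    rw [ind1_cross f c hxy, ind1_cross f c hxz]
    exact cross_inj f hcubic₁ hcubic₂ hc hxy hxz hyz
  · by_cases hy : y = v₁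
    · have hz : z ≠ v₁ := fun h => hyz (hy.trans h.symm)
      have hxy' : G₁.Adj x v₁ := hy ▸ hxy
      have he : (⟨s(x,y), hxy⟩ : G₁.edgeSet) = ⟨s(x,v₁), hxy'⟩ := Subtype.ext (by show s(x,y) = s(x,v₁); rw [hy])
      rw [he, ind1_cross' f c hxy', ind1_inl f c hx hz hxz]
      apply hcP
      · intro heq
        apply Subtype.ext_iff.1 at heq
        simp only [crossEdge, Sym2.eq_iff] at heq
        rcases heq with ⟨-, h2⟩ | ⟨h1, -⟩ <;> simp_all
      · exact ⟨Sum.inl ⟨x, hx⟩, by simp [crossEdge], by simp⟩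
    · by_cases hz : z = v₁
      · have hxz' : G₁.Adj x v₁ := hz ▸ hxz
        have he : (⟨s(x,z), hxz⟩ : G₁.edgeSet) = ⟨s(x,v₁), hxz'⟩ := Subtype.ext (by show s(x,z) = s(x,v₁); rw [hz])
        rw [he, ind1_cross' f c hxz', ind1_inl f c hx hy hxy]
        apply hcP
        · intro heq
          apply Subtype.ext_iff.1 at heq
          simp only [crossEdge, Sym2.eq_iff] at heq
          rcases heq with ⟨-, h2⟩ | ⟨h1, -⟩ <;> simp_all
        · exact ⟨Sum.inl ⟨x, hx⟩, by simp, by simp [crossEdge]⟩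
      · rw [ind1_inl f c hx hy hxy, ind1_inl f c hx hz hxz]
        apply hcP
        · intro heq
          apply Subtype.ext_iff.1 at heq
          simp only [Sym2.eq_iff] at heq
          rcases heq with ⟨-, h2⟩ | ⟨h1, h2⟩ <;> simp_all
        · exact ⟨Sum.inl ⟨x, hx⟩, by simp, by simp⟩

lemma cross_inj2 (hcubic₁ : IsCubic G₁) (hcubic₂ : IsCubic G₂)
    {c : (YJoin G₁ G₂ v₁ v₂ f).edgeSet → Fin 3}
    (hc : ProperAdj (YJoin G₁ G₂ v₁ v₂ f) c)
    {u u' : V₂} (h : G₂.Adj v₂ u) (h' : G₂.Adj v₂ u') (hne : u ≠ u') :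
    c (crossEdge f (f.symm ⟨u, h⟩).2) ≠ c (crossEdge f (f.symm ⟨u', h'⟩).2) := by
  apply cross_inj f hcubic₁ hcubic₂ hc
  intro heq
  apply hne
  have : f.symm ⟨u, h⟩ = f.symm ⟨u', h'⟩ := Subtype.ext heq
  have := f.symm.injective this
  exact congrArg Subtype.val this

lemma ind2_proper (hcubic₁ : IsCubic G₁) (hcubic₂ : IsCubic G₂)
    {c : (YJoin G₁ G₂ v₁ v₂ f).edgeSet → Fin 3}
    (hc : ProperAdj (YJoin G₁ G₂ v₁ v₂ f) c) : ProperAdj G₂ (ind2 f c) := by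
  have hcP : IsProper3EdgeColoring (Gj) c := (proper_iff_properAdj _ _).2 hc
  intro x y z hxy hxz hyz
  by_cases hx : x = v₂
  · have hxy' : G₂.Adj v₂ y := hx ▸ hxy
    have hxz' : G₂.Adj v₂ z := hx ▸ hxz
    have he₁ : (⟨s(x,y), hxy⟩ : G₂.edgeSet) = ⟨s(v₂,y), hxy'⟩ :=
      Subtype.ext (by show s(x,y) = s(v₂,y); rw [hx])
    have he₂ : (⟨s(x,z), hxz⟩ : G₂.edgeSet) = ⟨s(v₂,z), hxz'⟩ :=
      Subtype.ext (by show s(x,z) = s(v₂,z); rw [hx])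
    rw [he₁, he₂, ind2_cross f c hxy', ind2_cross f c hxz']
    exact cross_inj2 f hcubic₁ hcubic₂ hc hxy' hxz' hyz
  · by_cases hy : y = v₂
    · have hz : z ≠ v₂ := fun h => hyz (hy.trans h.symm)
      have hxy' : G₂.Adj x v₂ := hy ▸ hxy
      have he : (⟨s(x,y), hxy⟩ : G₂.edgeSet) = ⟨s(x,v₂), hxy'⟩ :=
        Subtype.ext (by show s(x,y) = s(x,v₂); rw [hy])
      rw [he, ind2_cross' f c hxy', ind2_inr f c hx hz hxz]
      apply hcP
      · intro heq
        apply Subtype.ext_iff.1 at heq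
        simp only [crossEdge, Sym2.eq_iff] at heq
        rcases heq with ⟨-, h2⟩ | ⟨h1, -⟩ <;> simp_all
      · refine ⟨Sum.inr ⟨x, hx⟩, ?_, by simp⟩
        simp [crossEdge, Sym2.mem_iff, Subtype.coe_eta, Equiv.apply_symm_apply]
    · by_cases hz : z = v₂
      · have hxz' : G₂.Adj x v₂ := hz ▸ hxz
        have he : (⟨s(x,z), hxz⟩ : G₂.edgeSet) = ⟨s(x,v₂), hxz'⟩ :=
          Subtype.ext (by show s(x,z) = s(x,v₂); rw [hz])
        rw [he, ind2_cross' f c hxz', ind2_inr f c hx hy hxy]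
        apply hcP
        · intro heq
          apply Subtype.ext_iff.1 at heq
          simp only [crossEdge, Sym2.eq_iff] at heq
          rcases heq with ⟨h1, h2⟩ | ⟨h1, h2⟩ <;> simp_all
        · refine ⟨Sum.inr ⟨x, hx⟩, by simp, ?_⟩
          simp [crossEdge, Sym2.mem_iff, Subtype.coe_eta, Equiv.apply_symm_apply]
      · rw [ind2_inr f c hx hy hxy, ind2_inr f c hx hz hxz]
        apply hcP
        · intro heq
          apply Subtype.ext_iff.1 at heq
          simp only [Sym2.eq_iff] at heq
          rcases heq with ⟨-, h2⟩ | ⟨h1, h2⟩ <;> simp_all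
        · exact ⟨Sum.inr ⟨x, hx⟩, by simp, by simp⟩

lemma edge_pre (e : (YJoin G₁ G₂ v₁ v₂ f).edgeSet) :
    (∃ e₁ : G₁.edgeSet, ∀ c, ind1 f c e₁ = c e) ∨
    (∃ e₂ : G₂.edgeSet, ∀ c, ind2 f c e₂ = c e) := by
  obtain ⟨e, he⟩ := e
  revert he
  induction e using Sym2.ind with | _ p q =>
  intro he
  match p, q with
  | Sum.inl a, Sum.inl b =>
    exact Or.inl ⟨⟨s(a.1, b.1), he⟩, fun c => ind1_inl f c a.2 b.2 he⟩
  | Sum.inr a, Sum.inr b =>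
    exact Or.inr ⟨⟨s(a.1, b.1), he⟩, fun c => ind2_inr f c a.2 b.2 he⟩
  | Sum.inl a, Sum.inr b =>
    obtain ⟨h, heq⟩ := (he : ∃ h : a.1 ∈ G₁.neighborSet v₁, (f ⟨a.1, h⟩ : V₂) = b.1)
    refine Or.inl ⟨⟨s(v₁, a.1), h⟩, fun c => ?_⟩
    refine (ind1_cross f c (u := a.1) h).trans ?_
    refine congrArg c (Subtype.ext ?_)
    show s(Sum.inl ⟨a.1, _⟩, (Sum.inr ⟨(f ⟨a.1, h⟩ : V₂), fne f h⟩ :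
      {x : V₁ // x ≠ v₁} ⊕ {y : V₂ // y ≠ v₂})) = s(Sum.inl a, Sum.inr b)
    have hb : (⟨(f ⟨a.1, h⟩ : V₂), fne f h⟩ : {y : V₂ // y ≠ v₂}) = b := Subtype.ext heq
    rw [hb]
  | Sum.inr b, Sum.inl a =>
    obtain ⟨h, heq⟩ := (he : ∃ h : a.1 ∈ G₁.neighborSet v₁, (f ⟨a.1, h⟩ : V₂) = b.1)
    refine Or.inl ⟨⟨s(v₁, a.1), h⟩, fun c => ?_⟩
    refine (ind1_cross f c (u := a.1) h).trans ?_
    refine congrArg c (Subtype.ext ?_)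
    show s(Sum.inl ⟨a.1, _⟩, (Sum.inr ⟨(f ⟨a.1, h⟩ : V₂), fne f h⟩ :
      {x : V₁ // x ≠ v₁} ⊕ {y : V₂ // y ≠ v₂})) = s(Sum.inr b, Sum.inl a)
    have hb : (⟨(f ⟨a.1, h⟩ : V₂), fne f h⟩ : {y : V₂ // y ≠ v₂}) = b := Subtype.ext heq
    rw [hb, Sym2.eq_swap]

lemma key_mix (hcubic₁ : IsCubic G₁) (hcubic₂ : IsCubic G₂)
    (huniq₁ : Uniquely3EdgeColorable G₁) (huniq₂ : Uniquely3EdgeColorable G₂)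
    {c c' : (YJoin G₁ G₂ v₁ v₂ f).edgeSet → Fin 3}
    (hc : IsProper3EdgeColoring (YJoin G₁ G₂ v₁ v₂ f) c)
    (hc' : IsProper3EdgeColoring (YJoin G₁ G₂ v₁ v₂ f) c')
    {e e' : (YJoin G₁ G₂ v₁ v₂ f).edgeSet} {e₁ : G₁.edgeSet} {e₂ : G₂.edgeSet}
    (h1 : ∀ d, ind1 f d e₁ = d e) (h2 : ∀ d, ind2 f d e₂ = d e')
    (heq : c e = c e') : c' e = c' e' := by
  have hcA := (proper_iff_properAdj _ _).1 hc
  have hcA' := (proper_iff_properAdj _ _).1 hc'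
  obtain ⟨u, h, hcm⟩ := cross_surj f hcubic₁ hcubic₂ hcA (c e)
  have p1 : IsProper3EdgeColoring G₁ (ind1 f c) :=
    (proper_iff_properAdj _ _).2 (ind1_proper f hcubic₁ hcubic₂ hcA)
  have p1' : IsProper3EdgeColoring G₁ (ind1 f c') :=
    (proper_iff_properAdj _ _).2 (ind1_proper f hcubic₁ hcubic₂ hcA')
  have p2 : IsProper3EdgeColoring G₂ (ind2 f c) :=
    (proper_iff_properAdj _ _).2 (ind2_proper f hcubic₁ hcubic₂ hcA)
  have p2' : IsProper3EdgeColoring G₂ (ind2 f c') :=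
    (proper_iff_properAdj _ _).2 (ind2_proper f hcubic₁ hcubic₂ hcA')
  have q1 := huniq₁.2 (ind1 f c) (ind1 f c') p1 p1' e₁ ⟨s(v₁, u), h⟩
  have r1 : ind1 f c e₁ = ind1 f c ⟨s(v₁, u), h⟩ := by rw [h1 c, ind1_cross, hcm]
  have r1' := q1.1 r1
  rw [h1 c', ind1_cross] at r1'
  have q2 := huniq₂.2 (ind2 f c) (ind2 f c') p2 p2' e₂
    ⟨s(v₂, (f ⟨u, h⟩ : V₂)), (f ⟨u, h⟩).2⟩
  have r2 : ind2 f c e₂ = ind2 f c ⟨s(v₂, (f ⟨u, h⟩ : V₂)), (f ⟨u, h⟩).2⟩ := by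
    rw [h2 c, ind2_cross_eq, hcm, heq]
  have r2' := q2.1 r2
  rw [h2 c', ind2_cross_eq] at r2'
  exact r1'.trans r2'.symm

lemma yjoin_unique (hcubic₁ : IsCubic G₁) (hcubic₂ : IsCubic G₂)
    (huniq₁ : Uniquely3EdgeColorable G₁) (huniq₂ : Uniquely3EdgeColorable G₂) :
    ∀ c c' : (YJoin G₁ G₂ v₁ v₂ f).edgeSet → Fin 3,
      IsProper3EdgeColoring (YJoin G₁ G₂ v₁ v₂ f) c →
      IsProper3EdgeColoring (YJoin G₁ G₂ v₁ v₂ f) c' →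
      ∀ e e', (c e = c e' ↔ c' e = c' e') := by
  suffices key : ∀ c c' : (YJoin G₁ G₂ v₁ v₂ f).edgeSet → Fin 3,
      IsProper3EdgeColoring (YJoin G₁ G₂ v₁ v₂ f) c →
      IsProper3EdgeColoring (YJoin G₁ G₂ v₁ v₂ f) c' →
      ∀ e e', c e = c e' → c' e = c' e' by
    exact fun c c' hc hc' e e' => ⟨key c c' hc hc' e e', key c' c hc' hc e e'⟩
  intro c c' hc hc' e e' heq
  have hcA := (proper_iff_properAdj _ _).1 hc
  have hcA' := (proper_iff_properAdj _ _).1 hc'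
  have p1 : IsProper3EdgeColoring G₁ (ind1 f c) :=
    (proper_iff_properAdj _ _).2 (ind1_proper f hcubic₁ hcubic₂ hcA)
  have p1' : IsProper3EdgeColoring G₁ (ind1 f c') :=
    (proper_iff_properAdj _ _).2 (ind1_proper f hcubic₁ hcubic₂ hcA')
  have p2 : IsProper3EdgeColoring G₂ (ind2 f c) :=
    (proper_iff_properAdj _ _).2 (ind2_proper f hcubic₁ hcubic₂ hcA)
  have p2' : IsProper3EdgeColoring G₂ (ind2 f c') :=
    (proper_iff_properAdj _ _).2 (ind2_proper f hcubic₁ hcubic₂ hcA')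
  rcases edge_pre f e with ⟨e₁, h1⟩ | ⟨e₂, h2⟩ <;>
    rcases edge_pre f e' with ⟨e₁', h1'⟩ | ⟨e₂', h2'⟩
  · have q := huniq₁.2 (ind1 f c) (ind1 f c') p1 p1' e₁ e₁'
    have r : ind1 f c e₁ = ind1 f c e₁' := by rw [h1 c, h1' c, heq]
    have r' := q.1 r
    rwa [h1 c', h1' c'] at r'
  · exact key_mix f hcubic₁ hcubic₂ huniq₁ huniq₂ hc hc' h1 h2' heq
  · exact (key_mix f hcubic₁ hcubic₂ huniq₁ huniq₂ hc hc' h1' h2 heq.symm).symm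
  · have q := huniq₂.2 (ind2 f c) (ind2 f c') p2 p2' e₂ e₂'
    have r : ind2 f c e₂ = ind2 f c e₂' := by rw [h2 c, h2' c, heq]
    have r' := q.1 r
    rwa [h2 c', h2' c'] at r'

lemma yjoin_exists (hcubic₁ : IsCubic G₁) (hcubic₂ : IsCubic G₂)
    (hex₁ : ∃ c, IsProper3EdgeColoring G₁ c) (hex₂ : ∃ c, IsProper3EdgeColoring G₂ c) :
    ∃ c, IsProper3EdgeColoring (YJoin G₁ G₂ v₁ v₂ f) c := by
  classical
  obtain ⟨c₁, hp₁⟩ := hex₁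
  obtain ⟨c₂, hp₂⟩ := hex₂
  have hA₁ := (proper_iff_properAdj _ _).1 hp₁
  have hA₂ := (proper_iff_properAdj _ _).1 hp₂
  -- color bijections on the two neighborhoods
  set F₁ : G₁.neighborSet v₁ → Fin 3 := fun n => c₁ ⟨s(v₁, n.1), n.2⟩ with hF₁
  set F₂ : G₁.neighborSet v₁ → Fin 3 := fun n => c₂ ⟨s(v₂, (f n).1), (f n).2⟩ with hF₂
  have hcard : Fintype.card (G₁.neighborSet v₁) = 3 := by
    have h3 := hcubic₁ v₁
    rw [Set.ncard_eq_toFinset_card'] at h3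
    rwa [← Set.toFinset_card]
  have b₁ : Function.Bijective F₁ := by
    refine (Fintype.bijective_iff_injective_and_card F₁).2 ⟨?_, by simp [hcard]⟩
    intro n m hnm
    by_contra hne
    exact hA₁ v₁ n.1 m.1 n.2 m.2 (fun h => hne (Subtype.ext h)) hnm
  have b₂ : Function.Bijective F₂ := by
    refine (Fintype.bijective_iff_injective_and_card F₂).2 ⟨?_, by simp [hcard]⟩
    intro n m hnm
    by_contra hne
    have hfne : (f n).1 ≠ (f m).1 :=
      fun h => hne (f.injective (Subtype.ext h) ▸ rfl)
    exact hA₂ v₂ (f n).1 (f m).1 (f n).2 (f m).2 hfne hnm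
  set E₂ : G₁.neighborSet v₁ ≃ Fin 3 := Equiv.ofBijective F₂ b₂ with hE₂
  set σ : Fin 3 → Fin 3 := fun i => F₁ (E₂.symm i) with hσ
  have σinj : Function.Injective σ := fun i j hij =>
    E₂.symm.injective (b₁.1 hij)
  have hkey : ∀ n : G₁.neighborSet v₁, σ (F₂ n) = F₁ n := by
    intro n
    have : E₂.symm (F₂ n) = n := E₂.symm_apply_apply n
    rw [hσ]; dsimp only; rw [this]
  -- extensions
  set c₁E : Sym2 V₁ → Fin 3 := fun s => if h : s ∈ G₁.edgeSet then c₁ ⟨s, h⟩ else 0 with hc₁E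
  set c₂E : Sym2 V₂ → Fin 3 := fun s => if h : s ∈ G₂.edgeSet then c₂ ⟨s, h⟩ else 0 with hc₂E
  have c₁E_eval : ∀ {a b : V₁} (h : G₁.Adj a b), c₁E s(a,b) = c₁ ⟨s(a,b), h⟩ :=
    fun h => dif_pos h
  have c₂E_eval : ∀ {a b : V₂} (h : G₂.Adj a b), c₂E s(a,b) = c₂ ⟨s(a,b), h⟩ :=
    fun h => dif_pos h
  set F : ({x : V₁ // x ≠ v₁} ⊕ {y : V₂ // y ≠ v₂}) →
      ({x : V₁ // x ≠ v₁} ⊕ {y : V₂ // y ≠ v₂}) → Fin 3 := fun p q =>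
    match p, q with
    | .inl a, .inl b => c₁E s(a.1, b.1)
    | .inr a, .inr b => σ (c₂E s(a.1, b.1))
    | .inl a, .inr _ => c₁E s(v₁, a.1)
    | .inr _, .inl a => c₁E s(v₁, a.1) with hF
  have hFsymm : ∀ p q, F p q = F q p := by
    rintro (a | a) (b | b)
    · exact congrArg c₁E Sym2.eq_swap
    · rfl
    · rfl
    · exact congrArg (σ ∘ c₂E) Sym2.eq_swap
  set d : (YJoin G₁ G₂ v₁ v₂ f).edgeSet → Fin 3 :=
    fun e => Sym2.lift ⟨F, hFsymm⟩ e.1 with hd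
  have dval : ∀ (x y) (h : (Gj).Adj x y), d ⟨s(x,y), h⟩ = F x y := fun _ _ _ => rfl
  refine ⟨d, (proper_iff_properAdj _ _).2 ?_⟩
  intro x y z hxy hxz hyz
  rw [dval x y hxy, dval x z hxz]
  match x, y, z with
  | Sum.inl a, Sum.inl b, Sum.inl b' =>
    show c₁E s(a.1, b.1) ≠ c₁E s(a.1, b'.1)
    rw [c₁E_eval (hxy : G₁.Adj a.1 b.1), c₁E_eval (hxz : G₁.Adj a.1 b'.1)]
    exact hA₁ a.1 b.1 b'.1 hxy hxz
      (fun h => hyz (by rw [show b = b' from Subtype.ext h]))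
  | Sum.inl a, Sum.inl b, Sum.inr w =>
    obtain ⟨h, heq⟩ := (hxz : ∃ h : a.1 ∈ G₁.neighborSet v₁, (f ⟨a.1, h⟩ : V₂) = w.1)
    show c₁E s(a.1, b.1) ≠ c₁E s(v₁, a.1)
    rw [c₁E_eval (hxy : G₁.Adj a.1 b.1), c₁E_eval (h : G₁.Adj v₁ a.1)]
    apply hp₁
    · intro hcon
      apply Subtype.ext_iff.1 at hcon
      rw [Sym2.eq_iff] at hcon
      rcases hcon with ⟨h1, h2⟩ | ⟨h1, h2⟩ <;> [exact a.2 h1; exact b.2 h2]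
    · exact ⟨a.1, by simp, by simp⟩
  | Sum.inl a, Sum.inr w, Sum.inl b =>
    obtain ⟨h, heq⟩ := (hxy : ∃ h : a.1 ∈ G₁.neighborSet v₁, (f ⟨a.1, h⟩ : V₂) = w.1)
    show c₁E s(v₁, a.1) ≠ c₁E s(a.1, b.1)
    rw [c₁E_eval (hxz : G₁.Adj a.1 b.1), c₁E_eval (h : G₁.Adj v₁ a.1)]
    apply hp₁
    · intro hcon
      apply Subtype.ext_iff.1 at hcon
      rw [Sym2.eq_iff] at hcon
      rcases hcon with ⟨h1, h2⟩ | ⟨h1, h2⟩ <;> [exact a.2 h1.symm; exact b.2 h1.symm]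
    · exact ⟨a.1, by simp, by simp⟩
  | Sum.inl a, Sum.inr w, Sum.inr w' =>
    exfalso
    obtain ⟨h, heq⟩ := (hxy : ∃ h : a.1 ∈ G₁.neighborSet v₁, (f ⟨a.1, h⟩ : V₂) = w.1)
    obtain ⟨h', heq'⟩ := (hxz : ∃ h : a.1 ∈ G₁.neighborSet v₁, (f ⟨a.1, h⟩ : V₂) = w'.1)
    exact hyz (by rw [show w = w' from Subtype.ext (heq ▸ heq' ▸ rfl)])
  | Sum.inr b, Sum.inr w, Sum.inr w' =>
    show σ (c₂E s(b.1, w.1)) ≠ σ (c₂E s(b.1, w'.1))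
    intro hcon
    apply σinj at hcon
    rw [c₂E_eval (hxy : G₂.Adj b.1 w.1), c₂E_eval (hxz : G₂.Adj b.1 w'.1)] at hcon
    exact hA₂ b.1 w.1 w'.1 hxy hxz
      (fun h => hyz (by rw [show w = w' from Subtype.ext h])) hcon
  | Sum.inr b, Sum.inr w, Sum.inl a =>
    obtain ⟨h, heq⟩ := (hxz : ∃ h : a.1 ∈ G₁.neighborSet v₁, (f ⟨a.1, h⟩ : V₂) = b.1)
    have hb : G₂.Adj v₂ b.1 := heq ▸ (f ⟨a.1, h⟩).2
    show σ (c₂E s(b.1, w.1)) ≠ c₁E s(v₁, a.1)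
    have key6 : c₁E s(v₁, a.1) = σ (c₂E s(v₂, b.1)) := by
      rw [c₁E_eval (h : G₁.Adj v₁ a.1), c₂E_eval hb]
      show F₁ ⟨a.1, h⟩ = σ (c₂ ⟨s(v₂, b.1), hb⟩)
      rw [← hkey ⟨a.1, h⟩]
      show σ (c₂ ⟨s(v₂, (f ⟨a.1, h⟩ : V₂)), (f ⟨a.1, h⟩).2⟩) = _
      refine congrArg σ (congrArg c₂ (Subtype.ext ?_))
      show s(v₂, (f ⟨a.1, h⟩ : V₂)) = s(v₂, b.1)
      rw [heq]
    rw [key6]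
    intro hcon
    apply σinj at hcon
    rw [c₂E_eval (hxy : G₂.Adj b.1 w.1), c₂E_eval hb] at hcon
    refine hp₂ ⟨s(b.1, w.1), hxy⟩ ⟨s(v₂, b.1), hb⟩ ?_ ⟨b.1, by simp, by simp⟩ hcon
    intro hcon2
    apply Subtype.ext_iff.1 at hcon2
    rw [Sym2.eq_iff] at hcon2
    rcases hcon2 with ⟨h1, h2⟩ | ⟨h1, h2⟩ <;> [exact b.2 h1; exact w.2 h2]
  | Sum.inr b, Sum.inl a, Sum.inr w =>
    obtain ⟨h, heq⟩ := (hxy : ∃ h : a.1 ∈ G₁.neighborSet v₁, (f ⟨a.1, h⟩ : V₂) = b.1)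
    have hb : G₂.Adj v₂ b.1 := heq ▸ (f ⟨a.1, h⟩).2
    show c₁E s(v₁, a.1) ≠ σ (c₂E s(b.1, w.1))
    have key6 : c₁E s(v₁, a.1) = σ (c₂E s(v₂, b.1)) := by
      rw [c₁E_eval (h : G₁.Adj v₁ a.1), c₂E_eval hb]
      show F₁ ⟨a.1, h⟩ = σ (c₂ ⟨s(v₂, b.1), hb⟩)
      rw [← hkey ⟨a.1, h⟩]
      show σ (c₂ ⟨s(v₂, (f ⟨a.1, h⟩ : V₂)), (f ⟨a.1, h⟩).2⟩) = _
      refine congrArg σ (congrArg c₂ (Subtype.ext ?_))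
      show s(v₂, (f ⟨a.1, h⟩ : V₂)) = s(v₂, b.1)
      rw [heq]
    rw [key6]
    intro hcon
    apply σinj at hcon
    rw [c₂E_eval (hxz : G₂.Adj b.1 w.1), c₂E_eval hb] at hcon
    refine hp₂ ⟨s(v₂, b.1), hb⟩ ⟨s(b.1, w.1), hxz⟩ ?_ ⟨b.1, by simp, by simp⟩ hcon
    intro hcon2
    apply Subtype.ext_iff.1 at hcon2
    rw [Sym2.eq_iff] at hcon2
    rcases hcon2 with ⟨h1, h2⟩ | ⟨h1, h2⟩ <;> [exact b.2 h1.symm; exact w.2 h1.symm]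
  | Sum.inr b, Sum.inl a, Sum.inl a' =>
    exfalso
    obtain ⟨h, heq⟩ := (hxy : ∃ h : a.1 ∈ G₁.neighborSet v₁, (f ⟨a.1, h⟩ : V₂) = b.1)
    obtain ⟨h', heq'⟩ := (hxz : ∃ h : a'.1 ∈ G₁.neighborSet v₁, (f ⟨a'.1, h⟩ : V₂) = b.1)
    have : (⟨a.1, h⟩ : G₁.neighborSet v₁) = ⟨a'.1, h'⟩ :=
      f.injective (Subtype.ext (heq.trans heq'.symm))
    have hval : a.1 = a'.1 := by
      have h2 := congrArg (fun (t : G₁.neighborSet v₁) => t.1) this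
      simpa using h2
    exact hyz (by rw [show a = a' from Subtype.ext hval])

end YJ

/-- the Y-join of two finite simple cubic uniquely 3-edge colorable graphs
is uniquely 3-edge colorable. -/
theorem yjoin_uniquely_three_edge_colorable {V₁ V₂ : Type} [Fintype V₁] [Fintype V₂]
    (G₁ : SimpleGraph V₁) (G₂ : SimpleGraph V₂)
    (hcubic₁ : IsCubic G₁) (hcubic₂ : IsCubic G₂)
    (huniq₁ : Uniquely3EdgeColorable G₁) (huniq₂ : Uniquely3EdgeColorable G₂)
    (v₁ : V₁) (v₂ : V₂) (f : G₁.neighborSet v₁ ≃ G₂.neighborSet v₂) :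
    Uniquely3EdgeColorable (YJoin G₁ G₂ v₁ v₂ f) :=
  ⟨yjoin_exists f hcubic₁ hcubic₂ huniq₁.1 huniq₂.1,
   yjoin_unique f hcubic₁ hcubic₂ huniq₁ huniq₂⟩
end

section
/- The generalized Petersen graph P(9,2) has exactly three Hamilton cycles (where two Hamilton cycles are counted as the same if they have the same edge set). -/
/-!
A Hamiltonian cycle of `P(9,2)` may be rotated to start at `a_0`. Deleting its first edge leaves
a Hamiltonian path ending at `a_0` whose first vertex is a neighbour of `a_0`, so its vertex list
is found by an exhaustive search over the paths ending at `a_0`, which the kernel runs (the graph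
is cubic and there are only about six thousand such paths). The search returns six vertex lists:
three cycles and their reversals, and the three cycles have pairwise different edge sets.
-/

/-- The generalized Petersen graph `P(9,2)`: vertices `a_0, …, a_8` (the left summand)
and `b_0, …, b_8` (the right summand), with edges `a_i a_{i+1}`, `b_i b_{i+1}` and
`a_i b_{2i}`, indices mod 9. -/
def petersen92 : SimpleGraph (Fin 9 ⊕ Fin 9) :=
  SimpleGraph.fromRel (fun x y =>
    match x, y with
    | Sum.inl i, Sum.inl j => j = i + 1
    | Sum.inr i, Sum.inr j => j = i + 1
    | Sum.inl i, Sum.inr j => j = 2 * i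
    | _, _ => False)

namespace SimpleGraph

variable {V : Type*} [DecidableEq V] {G : SimpleGraph V} (nbrs : V → List V)

def extendPath : List V → List (List V)
  | [] => []
  | u :: l => ((nbrs u).filter (· ∉ u :: l)).map (· :: u :: l)

/-- Supports of the `n`-edge paths ending at `u` in the graph with neighbour lists `nbrs`, grown
backwards from `u` at the head of the list. -/
def pathSearch (n : ℕ) (u : V) : List (List V) :=
  (fun ls => ls.flatMap (extendPath nbrs))^[n] [[u]]

def cycleSearch (n : ℕ) (u : V) : List (List V) :=
  ((pathSearch nbrs (n - 1) u).filter (fun l => u ∈ nbrs (l.headD u))).map (u :: ·)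

variable {nbrs}

theorem Walk.IsPath.support_mem_pathSearch (hnbrs : ∀ ⦃u v⦄, G.Adj u v → v ∈ nbrs u) {u : V} :
    ∀ {v : V} {p : G.Walk v u}, p.IsPath → p.support ∈ pathSearch nbrs p.length u
  | _, .nil, _ => by simp [pathSearch]
  | v, .cons h p, hp => by
    rw [cons_isPath_iff] at hp
    rw [length_cons, pathSearch, Function.iterate_succ_apply', support_cons, List.mem_flatMap]
    refine ⟨p.support, hp.1.support_mem_pathSearch hnbrs, ?_⟩
    rw [← p.cons_tail_support] at hp ⊢
    exact List.mem_map.2 ⟨v, List.mem_filter.2 ⟨hnbrs h.symm, decide_eq_true hp.2⟩, rfl⟩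

theorem Walk.IsCycle.support_mem_cycleSearch (hnbrs : ∀ ⦃u v⦄, G.Adj u v → v ∈ nbrs u) {u : V}
    {c : G.Walk u u} (hc : c.IsCycle) : c.support ∈ cycleSearch nbrs c.length u := by
  cases c with
  | nil => exact (not_isCycle_nil hc).elim
  | cons h p =>
    have hp : p.IsPath := ((cons_isCycle_iff p h).1 hc).1
    refine List.mem_map.2 ⟨p.support, List.mem_filter.2 ⟨?_, ?_⟩, rfl⟩
    · simpa using hp.support_mem_pathSearch hnbrs
    · rw [← p.cons_tail_support]
      exact decide_eq_true (hnbrs h.symm)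

theorem Walk.edgeSet_rotate {u v : V} (c : G.Walk v v) (h : u ∈ c.support) :
    (c.rotate u h).edgeSet = c.edgeSet :=
  Set.ext fun _ => (c.rotate_edges u h).perm.mem_iff

end SimpleGraph

open SimpleGraph

/-- A literal table: written as `i ± 1`, `2 * i` the kernel would carry unevaluated `Fin`
arithmetic through the search below and run several times slower. -/
def petersen92Neighbors : Fin 9 ⊕ Fin 9 → List (Fin 9 ⊕ Fin 9)
  | .inl 0 => [.inl 1, .inl 8, .inr 0]
  | .inl 1 => [.inl 2, .inl 0, .inr 2]
  | .inl 2 => [.inl 3, .inl 1, .inr 4]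
  | .inl 3 => [.inl 4, .inl 2, .inr 6]
  | .inl 4 => [.inl 5, .inl 3, .inr 8]
  | .inl 5 => [.inl 6, .inl 4, .inr 1]
  | .inl 6 => [.inl 7, .inl 5, .inr 3]
  | .inl 7 => [.inl 8, .inl 6, .inr 5]
  | .inl 8 => [.inl 0, .inl 7, .inr 7]
  | .inr 0 => [.inr 1, .inr 8, .inl 0]
  | .inr 1 => [.inr 2, .inr 0, .inl 5]
  | .inr 2 => [.inr 3, .inr 1, .inl 1]
  | .inr 3 => [.inr 4, .inr 2, .inl 6]
  | .inr 4 => [.inr 5, .inr 3, .inl 2]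
  | .inr 5 => [.inr 6, .inr 4, .inl 7]
  | .inr 6 => [.inr 7, .inr 5, .inl 3]
  | .inr 7 => [.inr 8, .inr 6, .inl 8]
  | .inr 8 => [.inr 0, .inr 7, .inl 4]

theorem petersen92_adj_iff {u v : Fin 9 ⊕ Fin 9} :
    petersen92.Adj u v ↔ v ∈ petersen92Neighbors u := by
  -- The derived `BEq` on `Sum` is not lawful, so `∈` on these lists has no `Decidable` instance.
  suffices ∀ u v, petersen92.Adj u v ↔ ∃ w ∈ petersen92Neighbors u, w = v by
    simpa using this u v
  rintro (i | i) (j | j) <;>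
    simp only [petersen92, fromRel_adj, ne_eq, Sum.inl.injEq, Sum.inr.injEq, reduceCtorEq,
      not_false_eq_true, true_and, or_false, false_or] <;>
    revert i j <;> decide

instance : DecidableRel petersen92.Adj := fun u v =>
  decidable_of_iff (∃ w ∈ petersen92Neighbors u, w = v) (by simp [petersen92_adj_iff])

def petersen92HamCycle : Fin 3 → petersen92.Walk (.inl 0) (.inl 0) := ![
  .ofSupport (G := petersen92)
    [.inl 0, .inr 0, .inr 8, .inr 7, .inl 8, .inl 7, .inl 6, .inr 3, .inr 2, .inr 1,
    .inl 5, .inl 4, .inl 3, .inr 6, .inr 5, .inr 4, .inl 2, .inl 1, .inl 0]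
    (by simp) (by decide),
  .ofSupport (G := petersen92)
    [.inl 0, .inl 8, .inr 7, .inr 6, .inr 5, .inl 7, .inl 6, .inl 5, .inr 1, .inr 0,
    .inr 8, .inl 4, .inl 3, .inl 2, .inr 4, .inr 3, .inr 2, .inl 1, .inl 0]
    (by simp) (by decide),
  .ofSupport (G := petersen92)
    [.inl 0, .inr 0, .inr 1, .inr 2, .inl 1, .inl 2, .inl 3, .inr 6, .inr 7, .inr 8,
    .inl 4, .inl 5, .inl 6, .inr 3, .inr 4, .inr 5, .inl 7, .inl 8, .inl 0]
    (by simp) (by decide)]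

theorem isHamiltonianCycle_petersen92HamCycle (i : Fin 3) :
    (petersen92HamCycle i).IsHamiltonianCycle := by
  rw [Walk.isHamiltonianCycle_iff_isCycle_and_length_eq, Walk.isCycle_def, Walk.isTrail_def]
  revert i
  decide +kernel

theorem petersen92HamCycle_edgeSet_injective :
    Function.Injective fun i => (petersen92HamCycle i).edgeSet := by
  have h : ∀ i j, (petersen92HamCycle i).edges ⊆ (petersen92HamCycle j).edges → i = j := by
    decide +kernel
  exact fun i j hij => h i j fun e he => (Set.ext_iff.1 hij e).1 he

theorem cycleSearch_petersen92 : ∀ l ∈ cycleSearch petersen92Neighbors 18 (.inl 0),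
    ∃ i, l = (petersen92HamCycle i).support ∨ l = (petersen92HamCycle i).support.reverse := by
  decide +kernel

theorem eq_petersen92HamCycle_of_isHamiltonianCycle {q : petersen92.Walk (.inl 0) (.inl 0)}
    (hq : q.IsHamiltonianCycle) :
    ∃ i, q = petersen92HamCycle i ∨ q = (petersen92HamCycle i).reverse := by
  have hlen : q.length = 18 := hq.length_eq
  have hmem := hq.isCycle.support_mem_cycleSearch fun _ _ => petersen92_adj_iff.1
  rw [hlen] at hmem
  obtain ⟨i, h | h⟩ := cycleSearch_petersen92 _ hmem
  · exact ⟨i, .inl (Walk.ext_support h)⟩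
  · exact ⟨i, .inr (Walk.ext_support (h.trans (Walk.support_reverse _).symm))⟩

/-- `P(9,2)` has exactly three Hamilton cycles, where two Hamilton cycles
are counted as the same if they have the same edge set. -/
theorem petersen92_three_hamiltonian_cycles :
    {s : Set (Sym2 (Fin 9 ⊕ Fin 9)) | ∃ (v : Fin 9 ⊕ Fin 9) (p : petersen92.Walk v v),
        p.IsHamiltonianCycle ∧ s = {e | e ∈ p.edges}}.ncard = 3 := by
  have hcycles : {s : Set (Sym2 (Fin 9 ⊕ Fin 9)) | ∃ (v : Fin 9 ⊕ Fin 9)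
      (p : petersen92.Walk v v), p.IsHamiltonianCycle ∧ s = {e | e ∈ p.edges}} =
      Set.range fun i => (petersen92HamCycle i).edgeSet := by
    ext s
    constructor
    · rintro ⟨v, p, hp, rfl⟩
      have h0 := hp.mem_support (.inl 0)
      obtain ⟨i, hi | hi⟩ := eq_petersen92HamCycle_of_isHamiltonianCycle (hp.rotate h0)
      · exact ⟨i, show _ = p.edgeSet by rw [← p.edgeSet_rotate h0, hi]⟩
      · exact ⟨i, show _ = p.edgeSet by rw [← p.edgeSet_rotate h0, hi, Walk.edgeSet_reverse]⟩
    · rintro ⟨i, rfl⟩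
      exact ⟨_, _, isHamiltonianCycle_petersen92HamCycle i, rfl⟩
  rw [hcycles, Set.ncard_range_of_injective petersen92HamCycle_edgeSet_injective, Nat.card_fin]
end
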